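/- arXiv:2502.05991 — 7 statements merged into one kernel-verified Lean document; each statement's English description precedes it below -/
import Mathlib

section
/- If D ≡ 3 (mod 4) is a square-free integer greater than 1, then the classical binary quadratic form Q(x,y) = 2x² + 2√D·xy + ((D+1)/2)y² over ℤ[√D] is additively indecomposable: there do not exist classical binary quadratic forms Q₁, Q₂ over ℤ[√D], both totally positive semi-definite and both nonzero, with Q = Q₁ + Q₂. -/
/-- The two real embeddings of `ℚ(√D)` restricted to `ℤ[√D]`. -/
noncomputable def emb1 (D : ℤ) (x : ℤ√D) : ℝ := x.re + x.im * Real.sqrt D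
noncomputable def emb2 (D : ℤ) (x : ℤ√D) : ℝ := x.re - x.im * Real.sqrt D

/-- The real binary form `a u² + b uv + c v²` is positive semi-definite. -/
def IsPSD (a b c : ℝ) : Prop :=
  ∀ u v : ℝ, 0 ≤ a * u ^ 2 + b * (u * v) + c * v ^ 2

/-- The classical binary quadratic form `a x² + 2 b xy + c y²` over `ℤ[√D]`
is totally positive semi-definite. -/
noncomputable def TotPSD (D : ℤ) (a b c : ℤ√D) : Prop :=
  IsPSD (emb1 D a) (2 * emb1 D b) (emb1 D c) ∧
  IsPSD (emb2 D a) (2 * emb2 D b) (emb2 D c)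

/-!
Write `Qᵢ = aᵢx² + 2bᵢxy + cᵢy²`. Total positive semi-definiteness makes `aᵢ` and `cᵢ` totally
nonnegative, and a totally nonnegative element of `ℤ[√D]` with nonzero `√D`-part has rational part
at least `2`, because its norm is nonnegative. Hence `a₁ + a₂ = 2` forces `a₁, a₂ ∈ {0, 1, 2}`.
Adding the determinant conditions `σ(bᵢ)² ≤ σ(aᵢ)σ(cᵢ)` over both embeddings `σ` gives the
integer inequality `re(bᵢ)² + D im(bᵢ)² ≤ aᵢ re(cᵢ)`. For `a₁ = a₂ = 1` it yields
`D ≤ (D + 1)/2`, which is absurd. For `a₁ = 0` it forces `b₁ = 0`, so `b₂ = √D` and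
`D ≤ 2 re(c₂)`; as `D` is odd this leaves `re(c₁) = 0`, and then `c₁ = 0`.
-/

namespace IsPSD

variable {A B C : ℝ}

lemma nonneg_left (h : IsPSD A B C) : 0 ≤ A := by simpa using h 1 0

lemma nonneg_right (h : IsPSD A B C) : 0 ≤ C := by simpa using h 0 1

lemma sq_le (h : IsPSD A B C) : B ^ 2 ≤ 4 * A * C := by
  have := discrim_le_zero fun u => by simpa [sq] using h u 1
  rw [discrim] at this
  linarith

end IsPSD

section Embeddings

variable {D : ℤ}

lemma emb1_add_emb2 (x : ℤ√D) : emb1 D x + emb2 D x = 2 * x.re := by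
  unfold emb1 emb2
  ring

lemma emb1_mul_emb2 (hD : 0 ≤ D) (x : ℤ√D) : emb1 D x * emb2 D x = x.norm := by
  have hs := Real.sq_sqrt (Int.cast_nonneg hD : (0 : ℝ) ≤ D)
  unfold emb1 emb2
  push_cast [Zsqrtd.norm_def]
  linear_combination (-(x.im : ℝ) ^ 2) * hs

lemma emb1_sq_add_emb2_sq (hD : 0 ≤ D) (x : ℤ√D) :
    emb1 D x ^ 2 + emb2 D x ^ 2 = 2 * (x.re ^ 2 + D * x.im ^ 2) := by
  have hs := Real.sq_sqrt (Int.cast_nonneg hD : (0 : ℝ) ≤ D)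
  unfold emb1 emb2
  linear_combination 2 * (x.im : ℝ) ^ 2 * hs

end Embeddings

def IsTotNonneg (D : ℤ) (x : ℤ√D) : Prop :=
  0 ≤ emb1 D x ∧ 0 ≤ emb2 D x

namespace IsTotNonneg

variable {D : ℤ} {x y : ℤ√D}

lemma re_nonneg (h : IsTotNonneg D x) : 0 ≤ x.re := by
  have := emb1_add_emb2 x
  have : (0 : ℝ) ≤ x.re := by linarith [h.1, h.2]
  exact_mod_cast this

lemma norm_nonneg (hD : 0 ≤ D) (h : IsTotNonneg D x) : 0 ≤ x.norm := by
  have := emb1_mul_emb2 hD x ▸ mul_nonneg h.1 h.2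
  exact_mod_cast this

lemma two_le_re (hD : 2 ≤ D) (h : IsTotNonneg D x) (him : x.im ≠ 0) : 2 ≤ x.re := by
  have hnorm := h.norm_nonneg (by omega)
  rw [Zsqrtd.norm_def] at hnorm
  nlinarith [mul_self_pos.2 him, h.re_nonneg]

lemma eq_zero_of_re_eq_zero (hD : 0 < D) (h : IsTotNonneg D x) (hre : x.re = 0) : x = 0 := by
  have hnorm := h.norm_nonneg hD.le
  rw [Zsqrtd.norm_def, hre] at hnorm
  have him : x.im * x.im = 0 := by nlinarith [mul_self_nonneg x.im]
  rw [mul_self_eq_zero] at him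
  exact Zsqrtd.ext (by simpa using hre) (by simpa using him)

lemma im_eq_zero_of_add_eq_two (hD : 2 ≤ D) (hx : IsTotNonneg D x) (hy : IsTotNonneg D y)
    (h : x + y = 2) : x.im = 0 := by
  have hre : x.re + y.re = 2 := by simpa using congrArg Zsqrtd.re h
  have him : x.im + y.im = 0 := by simpa using congrArg Zsqrtd.im h
  by_contra hx0
  have := hx.two_le_re hD hx0
  have := hy.two_le_re hD (by omega)
  omega

end IsTotNonneg

namespace TotPSD

variable {D m : ℤ} {a b c b₁ c₁ b₂ c₂ : ℤ√D}

lemma isTotNonneg_left (h : TotPSD D a b c) : IsTotNonneg D a :=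
  ⟨h.1.nonneg_left, h.2.nonneg_left⟩

lemma isTotNonneg_right (h : TotPSD D a b c) : IsTotNonneg D c :=
  ⟨h.1.nonneg_right, h.2.nonneg_right⟩

lemma sq_re_add_mul_sq_im_le (hD : 0 ≤ D) (h : TotPSD D a b c) (ha : a.im = 0) :
    b.re ^ 2 + D * b.im ^ 2 ≤ a.re * c.re := by
  have h₁ := h.1.sq_le
  have h₂ := h.2.sq_le
  have hb := emb1_sq_add_emb2_sq hD b
  have hc := emb1_add_emb2 c
  have hae₁ : emb1 D a = a.re := by simp [emb1, ha]
  have hae₂ : emb2 D a = a.re := by simp [emb2, ha]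
  rw [hae₁] at h₁
  rw [hae₂] at h₂
  have hsum : emb1 D b ^ 2 + emb2 D b ^ 2 ≤ a.re * (emb1 D c + emb2 D c) := by nlinarith
  rw [hb, hc] at hsum
  have : (b.re ^ 2 + D * b.im ^ 2 : ℝ) ≤ a.re * c.re := by linarith
  exact_mod_cast this

lemma eq_zero_of_zero_add_two (hD : 0 < D) (hm : 2 * m = D + 1)
    (h₁ : TotPSD D 0 b₁ c₁) (h₂ : TotPSD D 2 b₂ c₂)
    (hb : b₁ + b₂ = ⟨0, 1⟩) (hc : c₁ + c₂ = ⟨m, 0⟩) : b₁ = 0 ∧ c₁ = 0 := by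
  have hb_re : b₁.re + b₂.re = 0 := by simpa using congrArg Zsqrtd.re hb
  have hb_im : b₁.im + b₂.im = 1 := by simpa using congrArg Zsqrtd.im hb
  have hc_re : c₁.re + c₂.re = m := by simpa using congrArg Zsqrtd.re hc
  have key₁ := h₁.sq_re_add_mul_sq_im_le hD.le (by simp)
  have key₂ := h₂.sq_re_add_mul_sq_im_le hD.le (by simp)
  simp only [Zsqrtd.re_zero, zero_mul, Zsqrtd.re_ofNat] at key₁ key₂
  have hb₁_re : b₁.re ^ 2 = 0 := by nlinarith [sq_nonneg b₁.im, sq_nonneg b₁.re]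
  have hb₁_im : b₁.im ^ 2 = 0 := by nlinarith [sq_nonneg b₁.im, sq_nonneg b₁.re]
  rw [sq_eq_zero_iff] at hb₁_re hb₁_im
  have hD_le : D ≤ 2 * c₂.re := by
    rw [show b₂.re = 0 by omega, show b₂.im = 1 by omega] at key₂
    simpa using key₂
  have hc₁ : c₁.re = 0 := by linarith [h₁.isTotNonneg_right.re_nonneg]
  exact ⟨Zsqrtd.ext (by simpa using hb₁_re) (by simpa using hb₁_im),
    h₁.isTotNonneg_right.eq_zero_of_re_eq_zero hD hc₁⟩

lemma not_one_add_one (hD : 1 < D) (hm : 2 * m = D + 1)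
    (h₁ : TotPSD D 1 b₁ c₁) (h₂ : TotPSD D 1 b₂ c₂)
    (hb : b₁ + b₂ = ⟨0, 1⟩) (hc : c₁ + c₂ = ⟨m, 0⟩) : False := by
  have hb_im : b₁.im + b₂.im = 1 := by simpa using congrArg Zsqrtd.im hb
  have hc_re : c₁.re + c₂.re = m := by simpa using congrArg Zsqrtd.re hc
  have key₁ := h₁.sq_re_add_mul_sq_im_le (by omega) (by simp)
  have key₂ := h₂.sq_re_add_mul_sq_im_le (by omega) (by simp)
  simp only [Zsqrtd.re_one, one_mul] at key₁ key₂
  have him : 1 ≤ b₁.im ^ 2 + b₂.im ^ 2 := by nlinarith [sq_nonneg (b₁.im - b₂.im)]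
  nlinarith [sq_nonneg b₁.re, sq_nonneg b₂.re]

end TotPSD

theorem stmt1_general (D : ℤ) (h1 : 1 < D) (h3 : D % 4 = 3) :
    ¬ ∃ a₁ b₁ c₁ a₂ b₂ c₂ : ℤ√D,
      TotPSD D a₁ b₁ c₁ ∧ TotPSD D a₂ b₂ c₂ ∧
      ¬(a₁ = 0 ∧ b₁ = 0 ∧ c₁ = 0) ∧ ¬(a₂ = 0 ∧ b₂ = 0 ∧ c₂ = 0) ∧
      a₁ + a₂ = 2 ∧ b₁ + b₂ = ⟨0, 1⟩ ∧ c₁ + c₂ = ⟨(D + 1) / 2, 0⟩ := by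
  rintro ⟨a₁, b₁, c₁, a₂, b₂, c₂, h₁, h₂, hne₁, hne₂, ha, hb, hc⟩
  have hm : 2 * ((D + 1) / 2) = D + 1 := by omega
  have ha₁ := h₁.isTotNonneg_left.im_eq_zero_of_add_eq_two h1 h₂.isTotNonneg_left ha
  have ha₂ := h₂.isTotNonneg_left.im_eq_zero_of_add_eq_two h1 h₁.isTotNonneg_left
    (add_comm a₁ a₂ ▸ ha)
  have ha_re : a₁.re + a₂.re = 2 := by simpa using congrArg Zsqrtd.re ha
  have ha₁_nonneg := h₁.isTotNonneg_left.re_nonneg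
  have ha₂_nonneg := h₂.isTotNonneg_left.re_nonneg
  obtain ⟨rfl, rfl⟩ | ⟨rfl, rfl⟩ | ⟨rfl, rfl⟩ :
      (a₁ = 0 ∧ a₂ = 2) ∨ (a₁ = 1 ∧ a₂ = 1) ∨ (a₁ = 2 ∧ a₂ = 0) := by
    simp only [Zsqrtd.ext_iff, Zsqrtd.re_zero, Zsqrtd.im_zero, Zsqrtd.re_one, Zsqrtd.im_one,
      Zsqrtd.re_ofNat, Zsqrtd.im_ofNat, Nat.cast_ofNat, ha₁, ha₂, and_true]
    omega
  · exact hne₁ ⟨rfl, TotPSD.eq_zero_of_zero_add_two (by omega) hm h₁ h₂ hb hc⟩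
  · exact TotPSD.not_one_add_one h1 hm h₁ h₂ hb hc
  · exact hne₂ ⟨rfl, TotPSD.eq_zero_of_zero_add_two (by omega) hm h₂ h₁
      (add_comm b₁ b₂ ▸ hb) (add_comm c₁ c₂ ▸ hc)⟩

/-- For `D ≡ 3 (mod 4)` squarefree, `D > 1`, the classical form
`Q(x,y) = 2x² + 2√D·xy + ((D+1)/2)y²` over `ℤ[√D]` is additively indecomposable:
it is not the sum of two nonzero totally positive semi-definite classical forms. -/
theorem stmt1 (D : ℤ) (hsf : Squarefree D) (h1 : 1 < D) (h3 : D % 4 = 3) :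
    ¬ ∃ a₁ b₁ c₁ a₂ b₂ c₂ : ℤ√D,
      TotPSD D a₁ b₁ c₁ ∧ TotPSD D a₂ b₂ c₂ ∧
      ¬(a₁ = 0 ∧ b₁ = 0 ∧ c₁ = 0) ∧ ¬(a₂ = 0 ∧ b₂ = 0 ∧ c₂ = 0) ∧
      a₁ + a₂ = 2 ∧ b₁ + b₂ = ⟨0, 1⟩ ∧ c₁ + c₂ = ⟨(D + 1) / 2, 0⟩ :=
  stmt1_general D h1 h3
end

section
/- If D ≡ 2 (mod 4) is a square-free integer greater than 1, then the classical binary quadratic form Q(x,y) = 2x² + 2(1+√D)xy + (D/2 + 1 + √D)y² over ℤ[√D] has determinant 1 and is additively indecomposable as a classical form. -/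
lemma psd_a {a b c : ℝ} (h : IsPSD a b c) : 0 ≤ a := by
  have := h 1 0; simpa using this

lemma psd_c {a b c : ℝ} (h : IsPSD a b c) : 0 ≤ c := by
  have := h 0 1; simpa using this

lemma psd_disc {a b c : ℝ} (h : IsPSD a b c) : b ^ 2 ≤ 4 * (a * c) := by
  have ha := psd_a h
  have hc := psd_c h
  rcases eq_or_lt_of_le ha with ha0 | ha0
  · by_cases hb : b = 0
    · subst hb; nlinarith
    · have := h (-(c + 1) / b) 1
      rw [← ha0] at this
      field_simp at this
      rw [le_div_iff₀ (lt_of_le_of_ne (sq_nonneg b) (Ne.symm (pow_ne_zero 2 hb)))] at this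
      nlinarith [lt_of_le_of_ne (sq_nonneg b) (Ne.symm (pow_ne_zero 2 hb))]
  · have := h (-b) (2 * a)
    nlinarith

lemma psd_disc' {a b c : ℝ} (h : IsPSD a (2 * b) c) : b ^ 2 ≤ a * c := by
  have := psd_disc h; nlinarith

lemma sqrtD_facts (D : ℤ) (h1 : 1 < D) :
    (Real.sqrt (D : ℝ)) ^ 2 = (D : ℝ) ∧ 1 < Real.sqrt (D : ℝ) := by
  have h0 : (0:ℝ) ≤ (D:ℝ) := by exact_mod_cast (by omega : (0:ℤ) ≤ D)
  have hD1 : (1:ℝ) < (D:ℝ) := by exact_mod_cast h1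
  have hsq : (Real.sqrt (D:ℝ)) ^ 2 = (D:ℝ) := Real.sq_sqrt h0
  refine ⟨hsq, ?_⟩
  nlinarith [Real.sqrt_nonneg (D:ℝ)]

lemma int_sq_sum {m m' : ℤ} (h : m + m' = 1) : 1 ≤ m ^ 2 + m' ^ 2 := by
  rcases le_or_gt m 0 with h0 | h0
  · nlinarith
  · nlinarith

/-- Key lemma: if the first form has `a = 0`, the whole first form vanishes. -/
lemma key (D : ℤ) (h1 : 1 < D) (h2 : D % 4 = 2) (a b c a' b' c' : ℤ√D)
    (hP : TotPSD D a b c) (hP' : TotPSD D a' b' c')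
    (hA : a + a' = 2) (hB : b + b' = ⟨1, 1⟩) (hC : c + c' = ⟨D / 2 + 1, 1⟩)
    (ha0 : a = 0) : b = 0 ∧ c = 0 := by
  obtain ⟨hsq, hs1⟩ := sqrtD_facts D h1
  set s := Real.sqrt (D:ℝ) with hsdef
  have hhalf : 2 * (D / 2) = D := by omega
  have hh : 2 * ((D / 2 : ℤ) : ℝ) = (D : ℝ) := by exact_mod_cast hhalf
  subst ha0
  have ha' : a' = 2 := by rwa [zero_add] at hA
  obtain ⟨hp1, hp2⟩ := hP
  obtain ⟨hq1, hq2⟩ := hP'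
  -- b = 0
  have d1 := psd_disc' hp1
  have d2 := psd_disc' hp2
  have e0 : emb1 D (0:ℤ√D) = 0 := by simp [emb1]
  have e0' : emb2 D (0:ℤ√D) = 0 := by simp [emb2]
  rw [e0, zero_mul] at d1
  rw [e0', zero_mul] at d2
  have hb1 : emb1 D b = 0 := by
    have h0 : (emb1 D b) ^ 2 = 0 := le_antisymm d1 (sq_nonneg _)
    exact pow_eq_zero_iff (two_ne_zero) |>.mp h0
  have hb2 : emb2 D b = 0 := by
    have h0 : (emb2 D b) ^ 2 = 0 := le_antisymm d2 (sq_nonneg _)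
    exact pow_eq_zero_iff (two_ne_zero) |>.mp h0
  simp only [emb1, emb2, ← hsdef] at hb1 hb2
  have hbim : b.im = 0 := by
    have h0 : (b.im : ℝ) * s = 0 := by linarith
    rcases mul_eq_zero.mp h0 with h | h
    · exact_mod_cast h
    · linarith
  have hbre : b.re = 0 := by
    have : (b.re : ℝ) = 0 := by
      rw [hbim] at hb1; push_cast at hb1; linarith
    exact_mod_cast this
  have hb0 : b = 0 := by
    rw [Zsqrtd.ext_iff]; exact ⟨hbre, hbim⟩
  refine ⟨hb0, ?_⟩
  have hb' : b' = ⟨1, 1⟩ := by rw [hb0, zero_add] at hB; exact hB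
  -- c = 0
  have hCre : c.re + c'.re = D / 2 + 1 := by
    have := congrArg Zsqrtd.re hC; simpa [Zsqrtd.re_add] using this
  have hCim : c.im + c'.im = 1 := by
    have := congrArg Zsqrtd.im hC; simpa [Zsqrtd.im_add] using this
  have D1 := psd_disc' hq1
  have D2 := psd_disc' hq2
  rw [ha', hb'] at D1 D2
  simp only [emb1, emb2, ← hsdef, Zsqrtd.re_ofNat, Zsqrtd.im_ofNat] at D1 D2
  push_cast at D1 D2
  have rCre : (c.re : ℝ) + (c'.re : ℝ) = ((D / 2 : ℤ) : ℝ) + 1 := by exact_mod_cast hCre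
  have rCim : (c.im : ℝ) + (c'.im : ℝ) = 1 := by exact_mod_cast hCim
  have n1 := psd_c hp1
  have n2 := psd_c hp2
  simp only [emb1, emb2, ← hsdef] at n1 n2
  -- bounds on c.re
  have hub1 : 2 * (c.re : ℝ) + 2 * (c.im : ℝ) * s ≤ 1 := by nlinarith
  have hub2 : 2 * (c.re : ℝ) - 2 * (c.im : ℝ) * s ≤ 1 := by nlinarith
  have hcre : c.re = 0 := by
    have l1 : (0:ℝ) ≤ (c.re : ℝ) := by linarith
    have l2 : 2 * ((c.re : ℝ)) ≤ 1 := by linarith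
    have i1 : (0:ℤ) ≤ c.re := by exact_mod_cast l1
    have i2 : 2 * c.re ≤ 1 := by exact_mod_cast l2
    omega
  have hcim : c.im = 0 := by
    have hr : (c.re : ℝ) = 0 := by exact_mod_cast hcre
    have h0 : (c.im : ℝ) * s = 0 := by
      rw [hr] at n1 n2; linarith
    rcases mul_eq_zero.mp h0 with h | h
    · exact_mod_cast h
    · linarith
  rw [Zsqrtd.ext_iff]; exact ⟨hcre, hcim⟩

/-- For `D ≡ 2 (mod 4)` squarefree, `D > 1`, the classical form
`Q(x,y) = 2x² + 2(1+√D)xy + (D/2 + 1 + √D)y²` over `ℤ[√D]` has determinant `1`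
(determinant of `a x² + 2b xy + c y²` means `ac − b²`) and is additively
indecomposable as a classical form. -/
theorem stmt2 (D : ℤ) (hsf : Squarefree D) (h1 : 1 < D) (h2 : D % 4 = 2) :
    (2 : ℤ√D) * ⟨D / 2 + 1, 1⟩ - (⟨1, 1⟩ : ℤ√D) ^ 2 = 1 ∧
    ¬ ∃ a₁ b₁ c₁ a₂ b₂ c₂ : ℤ√D,
      TotPSD D a₁ b₁ c₁ ∧ TotPSD D a₂ b₂ c₂ ∧
      ¬(a₁ = 0 ∧ b₁ = 0 ∧ c₁ = 0) ∧ ¬(a₂ = 0 ∧ b₂ = 0 ∧ c₂ = 0) ∧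
      a₁ + a₂ = 2 ∧ b₁ + b₂ = ⟨1, 1⟩ ∧ c₁ + c₂ = ⟨D / 2 + 1, 1⟩ := by
  constructor
  · rw [Zsqrtd.ext_iff]
    constructor
    · simp [pow_two, Zsqrtd.re_mul, Zsqrtd.re_sub, Zsqrtd.re_ofNat, Zsqrtd.im_ofNat,
        Zsqrtd.re_one]
      omega
    · simp [pow_two, Zsqrtd.im_mul, Zsqrtd.im_sub, Zsqrtd.re_ofNat, Zsqrtd.im_ofNat,
        Zsqrtd.im_one]
  · rintro ⟨a₁, b₁, c₁, a₂, b₂, c₂, hP1, hP2, hn₁, hn₂, hA, hB, hC⟩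
    obtain ⟨hsq, hs1⟩ := sqrtD_facts D h1
    set s := Real.sqrt (D:ℝ) with hsdef
    have hhalf : 2 * (D / 2) = D := by omega
    have hh : 2 * ((D / 2 : ℤ) : ℝ) = (D : ℝ) := by exact_mod_cast hhalf
    have hAre : a₁.re + a₂.re = 2 := by
      have := congrArg Zsqrtd.re hA; simpa [Zsqrtd.re_add, Zsqrtd.re_ofNat] using this
    have hAim : a₁.im + a₂.im = 0 := by
      have := congrArg Zsqrtd.im hA; simpa [Zsqrtd.im_add, Zsqrtd.im_ofNat] using this
    have rAre : (a₁.re : ℝ) + (a₂.re : ℝ) = 2 := by exact_mod_cast hAre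
    have rAim : (a₁.im : ℝ) + (a₂.im : ℝ) = 0 := by exact_mod_cast hAim
    have n1 := psd_a hP1.1
    have n1' := psd_a hP1.2
    have n2 := psd_a hP2.1
    have n2' := psd_a hP2.2
    simp only [emb1, emb2, ← hsdef] at n1 n1' n2 n2'
    -- the `im` parts of a₁, a₂ vanish
    have him1 : a₁.im = 0 := by
      by_contra h
      have : 1 ≤ a₁.im ∨ a₁.im ≤ -1 := by omega
      rcases this with h' | h'
      · have hr : (1:ℝ) ≤ (a₁.im : ℝ) := by exact_mod_cast h'
        nlinarith
      · have hr : (a₁.im : ℝ) ≤ -1 := by exact_mod_cast h'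
        nlinarith
    have him2 : a₂.im = 0 := by omega
    have h0le1 : 0 ≤ a₁.re := by
      have : (0:ℝ) ≤ (a₁.re : ℝ) := by rw [him1] at n1; push_cast at n1; linarith
      exact_mod_cast this
    have h0le2 : 0 ≤ a₂.re := by
      have : (0:ℝ) ≤ (a₂.re : ℝ) := by rw [him2] at n2; push_cast at n2; linarith
      exact_mod_cast this
    have hcases : a₁.re = 0 ∨ a₂.re = 0 ∨ (a₁.re = 1 ∧ a₂.re = 1) := by omega
    rcases hcases with h0 | h0 | ⟨he1, he2⟩
    · have ha0 : a₁ = 0 := by rw [Zsqrtd.ext_iff]; exact ⟨h0, him1⟩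
      obtain ⟨hb0, hc0⟩ := key D h1 h2 a₁ b₁ c₁ a₂ b₂ c₂ hP1 hP2 hA hB hC ha0
      exact hn₁ ⟨ha0, hb0, hc0⟩
    · have ha0 : a₂ = 0 := by rw [Zsqrtd.ext_iff]; exact ⟨h0, him2⟩
      have hA' : a₂ + a₁ = 2 := by rw [add_comm]; exact hA
      have hB' : b₂ + b₁ = ⟨1, 1⟩ := by rw [add_comm]; exact hB
      have hC' : c₂ + c₁ = ⟨D / 2 + 1, 1⟩ := by rw [add_comm]; exact hC
      obtain ⟨hb0, hc0⟩ := key D h1 h2 a₂ b₂ c₂ a₁ b₁ c₁ hP2 hP1 hA' hB' hC' ha0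
      exact hn₂ ⟨ha0, hb0, hc0⟩
    · -- a₁ = a₂ = 1 : impossible
      have hBre : b₁.re + b₂.re = 1 := by
        have := congrArg Zsqrtd.re hB; simpa [Zsqrtd.re_add] using this
      have hBim : b₁.im + b₂.im = 1 := by
        have := congrArg Zsqrtd.im hB; simpa [Zsqrtd.im_add] using this
      have hCre : c₁.re + c₂.re = D / 2 + 1 := by
        have := congrArg Zsqrtd.re hC; simpa [Zsqrtd.re_add] using this
      have hCim : c₁.im + c₂.im = 1 := by
        have := congrArg Zsqrtd.im hC; simpa [Zsqrtd.im_add] using this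
      have rBre : (b₁.re : ℝ) + (b₂.re : ℝ) = 1 := by exact_mod_cast hBre
      have rBim : (b₁.im : ℝ) + (b₂.im : ℝ) = 1 := by exact_mod_cast hBim
      have rCre : (c₁.re : ℝ) + (c₂.re : ℝ) = ((D / 2 : ℤ) : ℝ) + 1 := by exact_mod_cast hCre
      have rCim : (c₁.im : ℝ) + (c₂.im : ℝ) = 1 := by exact_mod_cast hCim
      have d11 := psd_disc' hP1.1
      have d12 := psd_disc' hP1.2
      have d21 := psd_disc' hP2.1
      have d22 := psd_disc' hP2.2
      simp only [emb1, emb2, ← hsdef, he1, he2, him1, him2] at d11 d12 d21 d22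
      push_cast at d11 d12 d21 d22
      have hI1 : (1:ℝ) ≤ (b₁.re : ℝ) ^ 2 + (b₂.re : ℝ) ^ 2 := by
        exact_mod_cast int_sq_sum hBre
      have hI2 : (1:ℝ) ≤ (b₁.im : ℝ) ^ 2 + (b₂.im : ℝ) ^ 2 := by
        exact_mod_cast int_sq_sum hBim
      have hDpos : (0:ℝ) ≤ (D:ℝ) := by positivity
      have hX1 : (b₁.im : ℝ) ^ 2 * s ^ 2 = (b₁.im : ℝ) ^ 2 * (D:ℝ) := by rw [hsq]
      have hX2 : (b₂.im : ℝ) ^ 2 * s ^ 2 = (b₂.im : ℝ) ^ 2 * (D:ℝ) := by rw [hsq]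
      have hY : (D:ℝ) * 1 ≤ (D:ℝ) * ((b₁.im : ℝ) ^ 2 + (b₂.im : ℝ) ^ 2) :=
        mul_le_mul_of_nonneg_left hI2 hDpos
      have hD1 : (1:ℝ) < (D:ℝ) := by exact_mod_cast h1
      nlinarith [d11, d12, d21, d22, hI1, hX1, hX2, hY]
end

section
/- For every square-free integer D > 1, the non-classical binary quadratic form x² + xy + y² over the ring of integers of ℚ(√D) is additively indecomposable; i.e., it cannot be written as a sum of two nonzero totally positive semi-definite integral binary quadratic forms over O_{ℚ(√D)}. -/
open NumberField

/-- The binary quadratic form `a x² + b xy + c y²` with coefficients in a number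
field `K` is totally positive semi-definite: positive semi-definite under every
real embedding of `K`. -/
def TPSDK (K : Type*) [Field K] (a b c : K) : Prop :=
  ∀ σ : K →+* ℝ, ∀ u v : ℝ, 0 ≤ σ a * u ^ 2 + σ b * (u * v) + σ c * v ^ 2

/-!
Since `√D` is irrational and real under every embedding, `ℚ(√D)` is totally real. Evaluating
the summands at `(1, 0)` and `(0, 1)` shows that `a₁, a₂` (and likewise `c₁, c₂`) are totally
nonnegative algebraic integers with sum `1`. Their product is then at most `1/4` at every
real place, while a nonzero algebraic integer has a place of absolute value at least `1`; so
one of them vanishes. A totally positive semi-definite form with `a = 0` or `c = 0` has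
`b = 0`, and each of the four resulting cases makes one summand zero or contradicts
`b₁ + b₂ = 1`.
-/

lemma Complex.star_eq_self_of_sq_eq {z : ℂ} {d : ℝ} (hd : 0 ≤ d) (h : z ^ 2 = d) :
    star z = z := by
  have : z ^ 2 = (√d : ℂ) ^ 2 := by rw [h, ← Complex.ofReal_pow, Real.sq_sqrt hd]
  rcases sq_eq_sq_iff_eq_or_eq_neg.mp this with rfl | rfl <;> simp [Complex.conj_ofReal]

lemma Int.not_isSquare_cast_of_squarefree {D : ℤ} (hsf : Squarefree D) (h1 : 1 < D) :
    ¬ IsSquare (D : ℚ) := by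
  rw [Rat.isSquare_intCast_iff]
  rintro ⟨z, rfl⟩
  rcases Int.isUnit_iff.mp (hsf z ⟨1, by ring⟩) with rfl | rfl <;> omega

namespace NumberField

open IntermediateField

variable {K : Type*} [Field K] [NumberField K]

theorem isTotallyReal_of_sq_eq {r : K} {d : ℚ} (hd : 0 < d) (hsq : ¬ IsSquare d)
    (hr : r ^ 2 = d) (hdeg : Module.finrank ℚ K = 2) : IsTotallyReal K := by
  have hrat : r ∉ (⊥ : IntermediateField ℚ K) := by
    rintro ⟨q, rfl⟩
    have hq : ((q ^ 2 : ℚ) : K) = d := by simpa using hr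
    exact hsq ⟨q, (Rat.cast_injective hq).symm.trans (sq q)⟩
  have : IsSimpleOrder (IntermediateField ℚ K) :=
    isSimpleOrder_of_finrank_prime ℚ K (hdeg ▸ Nat.prime_two)
  have htop : ℚ⟮r⟯ = ⊤ :=
    (eq_bot_or_eq_top _).resolve_left (adjoin_simple_eq_bot_iff.not.mpr hrat)
  rw [← maximalRealSubfield_eq_top_iff_isTotallyReal, eq_top_iff]
  intro x _
  have hx : x ∈ ℚ⟮r⟯ := htop ▸ mem_top
  refine (Subfield.closure_le.mpr ?_) hx
  rintro _ (⟨q, rfl⟩ | rfl)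
  · exact SubfieldClass.ratCast_mem (maximalRealSubfield K) q
  · intro φ
    exact Complex.star_eq_self_of_sq_eq (d := d) (by positivity) (by simp [← map_pow, hr])

theorem RingOfIntegers.eq_zero_or_eq_zero_of_add_eq_one [IsTotallyReal K] {x y : 𝓞 K}
    (hxy : x + y = 1) (hx : ∀ ρ : K →+* ℝ, 0 ≤ ρ x) (hy : ∀ ρ : K →+* ℝ, 0 ≤ ρ y) :
    x = 0 ∨ y = 0 := by
  by_contra! hne
  have hsmall (w : InfinitePlace K) : w (x * y : 𝓞 K) ≤ 1 / 4 := by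
    have hρ (ρ : K →+* ℝ) : ‖ρ (x * y : 𝓞 K)‖ ≤ 1 / 4 := by
      have hsum : ρ x + ρ y = 1 := by simpa using congrArg (fun z : 𝓞 K ↦ ρ z) hxy
      push_cast
      rw [map_mul, Real.norm_eq_abs, abs_of_nonneg (mul_nonneg (hx ρ) (hy ρ))]
      nlinarith [sq_nonneg (ρ x - ρ y)]
    rw [← InfinitePlace.norm_embedding_of_isReal (IsTotallyReal.isReal w)]
    exact hρ _
  obtain ⟨w⟩ := (inferInstance : Nonempty (InfinitePlace K))
  have := InfinitePlace.one_le_of_lt_one (w := w) (mul_ne_zero hne.1 hne.2)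
    fun z _ ↦ (hsmall z).trans_lt (by norm_num)
  linarith [hsmall w]

end NumberField

namespace TPSDK

variable {K : Type*} [Field K] {a b c : K}

lemma swap (h : TPSDK K a b c) : TPSDK K c b a := fun ρ u v ↦ by
  linarith [h ρ v u, mul_comm u v]

lemma map_a_nonneg (h : TPSDK K a b c) (ρ : K →+* ℝ) : 0 ≤ ρ a := by
  simpa using h ρ 1 0

lemma map_c_nonneg (h : TPSDK K a b c) (ρ : K →+* ℝ) : 0 ≤ ρ c :=
  h.swap.map_a_nonneg ρ

lemma b_eq_zero_of_a_eq_zero (h : TPSDK K a b c) (ρ : K →+* ℝ) (ha : a = 0) : b = 0 := by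
  by_contra hb
  have hρb : ρ b ≠ 0 := (map_ne_zero ρ).mpr hb
  -- on the line `v = 1` the form is affine in `u` with slope `ρ b`, hence takes negative values
  have := h ρ (-(ρ c + 1) / ρ b) 1
  rw [ha, map_zero, mul_one, mul_div_cancel₀ _ hρb] at this
  linarith

lemma b_eq_zero_of_c_eq_zero (h : TPSDK K a b c) (ρ : K →+* ℝ) (hc : c = 0) : b = 0 :=
  h.swap.b_eq_zero_of_a_eq_zero ρ hc

end TPSDK

/-- For every squarefree `D > 1` and `K = ℚ(√D)`, the non-classical binary
quadratic form `x² + xy + y²` over `𝓞 K` is additively indecomposable: it is not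
a sum of two nonzero totally positive semi-definite integral binary forms. -/
theorem stmt3 (D : ℤ) (hsf : Squarefree D) (h1 : 1 < D)
    (K : Type*) [Field K] [NumberField K] (r : K) (hr : r ^ 2 = D)
    (hdeg : Module.finrank ℚ K = 2) :
    ¬ ∃ a₁ b₁ c₁ a₂ b₂ c₂ : 𝓞 K,
      TPSDK K a₁ b₁ c₁ ∧ TPSDK K a₂ b₂ c₂ ∧
      ¬(a₁ = 0 ∧ b₁ = 0 ∧ c₁ = 0) ∧ ¬(a₂ = 0 ∧ b₂ = 0 ∧ c₂ = 0) ∧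
      a₁ + a₂ = 1 ∧ b₁ + b₂ = 1 ∧ c₁ + c₂ = 1 := by
  rintro ⟨a₁, b₁, c₁, a₂, b₂, c₂, h₁, h₂, hne₁, hne₂, ha, hb, hc⟩
  have : IsTotallyReal K :=
    isTotallyReal_of_sq_eq (d := D) (by exact_mod_cast zero_lt_one.trans h1)
      (Int.not_isSquare_cast_of_squarefree hsf h1) (by simpa using hr) hdeg
  let ρ : K →+* ℝ :=
    InfinitePlace.embedding_of_isReal (IsTotallyReal.isReal (Classical.arbitrary _))
  have hb₁ : a₁ = 0 ∨ c₁ = 0 → b₁ = 0 := by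
    rintro (h | h)
    · exact_mod_cast h₁.b_eq_zero_of_a_eq_zero ρ (by simp [h])
    · exact_mod_cast h₁.b_eq_zero_of_c_eq_zero ρ (by simp [h])
  have hb₂ : a₂ = 0 ∨ c₂ = 0 → b₂ = 0 := by
    rintro (h | h)
    · exact_mod_cast h₂.b_eq_zero_of_a_eq_zero ρ (by simp [h])
    · exact_mod_cast h₂.b_eq_zero_of_c_eq_zero ρ (by simp [h])
  rcases RingOfIntegers.eq_zero_or_eq_zero_of_add_eq_one ha h₁.map_a_nonneg h₂.map_a_nonneg
    with ha₀ | ha₀ <;>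
  rcases RingOfIntegers.eq_zero_or_eq_zero_of_add_eq_one hc h₁.map_c_nonneg h₂.map_c_nonneg
    with hc₀ | hc₀
  · exact hne₁ ⟨ha₀, hb₁ (.inl ha₀), hc₀⟩
  · simp [hb₁ (.inl ha₀), hb₂ (.inr hc₀)] at hb
  · simp [hb₁ (.inr hc₀), hb₂ (.inl ha₀)] at hb
  · exact hne₂ ⟨ha₀, hb₂ (.inl ha₀), hc₀⟩
end

section
/- Let D = m² + 1 be square-free with m ≥ 1 odd, K = ℚ(√D), and set αᵢ = mi + 1 + i√D for 1 ≤ i ≤ m. For all 1 ≤ i, j ≤ m with i ≠ j, the product αᵢ·αⱼ′ (where ′ denotes conjugation) cannot be written as a sum of squares of elements of O_K = ℤ[√D]. -/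
/-- Let `D = m² + 1` be squarefree with `m ≥ 1` odd, and `αᵢ = mi + 1 + i√D`.
For `1 ≤ i, j ≤ m` with `i ≠ j`, the product `αᵢ·αⱼ′` is not a sum of squares
in `ℤ[√D]`. -/
theorem stmt9 (m : ℤ) (hm : Odd m) (hm1 : 1 ≤ m) (hsf : Squarefree (m ^ 2 + 1))
    (i j : ℤ) (hi1 : 1 ≤ i) (him : i ≤ m) (hj1 : 1 ≤ j) (hjm : j ≤ m)
    (hij : i ≠ j) :
    ¬ ∃ (n : ℕ) (f : Fin n → ℤ√(m ^ 2 + 1)),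
      (⟨m * i + 1, i⟩ : ℤ√(m ^ 2 + 1)) * ⟨m * j + 1, -j⟩ = ∑ k, (f k) ^ 2 := by
  rintro ⟨n, f, h⟩
  have hd2 : (2 : ℤ) ≤ m ^ 2 + 1 := by nlinarith
  let R : ℤ√(m ^ 2 + 1) →+ ℤ :=
    { toFun := Zsqrtd.re, map_zero' := rfl, map_add' := fun _ _ => rfl }
  let I : ℤ√(m ^ 2 + 1) →+ ℤ :=
    { toFun := Zsqrtd.im, map_zero' := rfl, map_add' := fun _ _ => rfl }
  have hre : m * i + m * j + 1 - i * j =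
      ∑ k, ((f k).re * (f k).re + (m * m + 1) * (f k).im * (f k).im) := by
    have h1 := congrArg R h
    rw [map_sum] at h1
    simp only [R, AddMonoidHom.coe_mk, ZeroHom.coe_mk, Zsqrtd.re_mul, pow_two] at h1
    change Zsqrtd.re ((⟨m * i + 1, i⟩ : ℤ√(m ^ 2 + 1)) * ⟨m * j + 1, -j⟩) = ∑ x, Zsqrtd.re (f x * f x) at h1; simp only [Zsqrtd.re_mul, pow_two] at h1
    rw [← h1]; ring
  have himeq : i - j = ∑ k, ((f k).re * (f k).im + (f k).im * (f k).re) := by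
    have h1 := congrArg I h
    rw [map_sum] at h1
    simp only [I, AddMonoidHom.coe_mk, ZeroHom.coe_mk, Zsqrtd.im_mul, pow_two] at h1
    change Zsqrtd.im ((⟨m * i + 1, i⟩ : ℤ√(m ^ 2 + 1)) * ⟨m * j + 1, -j⟩) = ∑ x, Zsqrtd.im (f x * f x) at h1; simp only [Zsqrtd.im_mul, pow_two] at h1
    rw [← h1]; ring
  have hne : i - j ≠ 0 := sub_ne_zero_of_ne hij
  have nonneg : ∀ k, 0 ≤ (f k).re * (f k).re + (m * m + 1) * (f k).im * (f k).im := by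
    intro k
    nlinarith [mul_self_nonneg (f k).re, mul_self_nonneg (f k).im]
  by_cases hall : ∀ k, (f k).im = 0
  · apply hne
    rw [himeq]
    apply Finset.sum_eq_zero
    intro k _
    rw [hall k]; ring
  · push_neg at hall
    obtain ⟨k₀, hk₀⟩ := hall
    have hb1 : 1 ≤ (f k₀).im * (f k₀).im := by
      have h1 : 1 ≤ |(f k₀).im| := Int.one_le_abs hk₀
      nlinarith [abs_nonneg (f k₀).im, abs_mul_abs_self (f k₀).im]
    have hub : m * i + m * j + 1 - i * j ≤ m ^ 2 + 1 := by
      nlinarith [mul_nonneg (sub_nonneg.2 him) (sub_nonneg.2 hjm)]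
    have hsplit : ((f k₀).re * (f k₀).re + (m * m + 1) * (f k₀).im * (f k₀).im) +
        ∑ k ∈ Finset.univ.erase k₀,
          ((f k).re * (f k).re + (m * m + 1) * (f k).im * (f k).im) =
        ∑ k, ((f k).re * (f k).re + (m * m + 1) * (f k).im * (f k).im) :=
      Finset.add_sum_erase Finset.univ
        (fun k => (f k).re * (f k).re + (m * m + 1) * (f k).im * (f k).im)
        (Finset.mem_univ k₀)
    rw [← hsplit] at hre
    have hrest_nonneg : 0 ≤ ∑ k ∈ Finset.univ.erase k₀,
        ((f k).re * (f k).re + (m * m + 1) * (f k).im * (f k).im) :=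
      Finset.sum_nonneg fun k _ => nonneg k
    have hk₀lb : m * m + 1 ≤ (f k₀).re * (f k₀).re + (m * m + 1) * (f k₀).im * (f k₀).im := by
      nlinarith [mul_self_nonneg (f k₀).re]
    have hrest0 : ∀ k ∈ Finset.univ.erase k₀,
        (f k).re * (f k).re + (m * m + 1) * (f k).im * (f k).im = 0 := by
      have hle : ∑ k ∈ Finset.univ.erase k₀,
          ((f k).re * (f k).re + (m * m + 1) * (f k).im * (f k).im) ≤ 0 := by linarith
      exact fun k hk => (Finset.sum_eq_zero_iff_of_nonneg (fun k _ => nonneg k)).1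
        (le_antisymm hle hrest_nonneg) k hk
    have ha0 : (f k₀).re = 0 := by
      have h1 : (f k₀).re * (f k₀).re ≤ 0 := by
        nlinarith [mul_nonneg (by nlinarith : (0:ℤ) ≤ m * m + 1)
          (by linarith : (0:ℤ) ≤ (f k₀).im * (f k₀).im - 1)]
      nlinarith [mul_self_nonneg (f k₀).re]
    apply hne
    rw [himeq]
    apply Finset.sum_eq_zero
    intro k _
    by_cases hk : k = k₀
    · rw [hk, ha0]; ring
    · have h0 := hrest0 k (Finset.mem_erase.2 ⟨hk, Finset.mem_univ k⟩)
      have hre0 : (f k).re = 0 := by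
        nlinarith [mul_self_nonneg (f k).re, mul_self_nonneg (f k).im]
      rw [hre0]; ring
end

section
/- Let K = ℚ(√D) with D > 1 square-free and let ε⁺ be the smallest totally positive unit greater than 1 (ε⁺ = ε_D if N(ε_D)=1, else ε_D²). If ξ ∈ K is totally positive with N(ξ) ≥ N(1 + ε⁺), then there exists a totally positive α ∈ O_K with ξ ⪰ α, i.e., ξ − α is totally nonnegative. -/
open NumberField

lemma stmt11_repr {K : Type*} [Field K] [CharZero K] {r : K}
    (hli : LinearIndependent ℚ ![1, r]) (hdeg : Module.finrank ℚ K = 2)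
    (x : K) : ∃ a b : ℚ, x = (a : K) + (b : K) * r := by
  let B : Module.Basis (Fin 2) ℚ K := basisOfLinearIndependentOfCardEqFinrank hli (by simpa using hdeg.symm)
  refine ⟨B.repr x 0, B.repr x 1, ?_⟩
  have hs := B.sum_repr x
  rw [Fin.sum_univ_two] at hs
  have h0 : B 0 = 1 := by simp [B]
  have h1 : B 1 = r := by simp [B]
  rw [h0, h1] at hs
  rw [Algebra.smul_def, Algebra.smul_def, eq_ratCast, eq_ratCast, mul_one] at hs
  exact hs.symm

lemma stmt11_ext {K : Type*} [Field K] [CharZero K] {r : K}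
    (hli : LinearIndependent ℚ ![1, r]) (hdeg : Module.finrank ℚ K = 2)
    {L : Type*} [DivisionRing L] (f g : K →+* L) (h : f r = g r) : f = g := by
  ext x
  obtain ⟨a, b, rfl⟩ := stmt11_repr hli hdeg x
  simp [h]


/-- Let `K = ℚ(√D)` with conjugation `τ` and a fixed real embedding `σ₀`, and
let `ε⁺` be the smallest totally positive unit `> 1`. If `ξ ∈ K` is totally
positive with `N(ξ) ≥ N(1 + ε⁺)`, then there is a totally positive `α ∈ 𝓞 K`
with `ξ ⪰ α`, i.e. `ξ − α` totally nonnegative. -/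
theorem stmt11 (D : ℤ) (hsf : Squarefree D) (h1 : 1 < D)
    (K : Type*) [Field K] [NumberField K] (r : K) (hr : r ^ 2 = D)
    (hdeg : Module.finrank ℚ K = 2)
    (τ : K →+* K) (hτ : τ r = -r)
    (σ₀ : K →+* ℝ)
    (ε : 𝓞 K) (hεu : IsUnit ε)
    (hεpos : ∀ σ : K →+* ℝ, 0 < σ (ε : K))
    (hεgt : 1 < σ₀ (ε : K))
    (hεmin : ∀ u : 𝓞 K, IsUnit u → (∀ σ : K →+* ℝ, 0 < σ (u : K)) →
      1 < σ₀ (u : K) → σ₀ (ε : K) ≤ σ₀ (u : K))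
    (ξ : K) (hξpos : ∀ σ : K →+* ℝ, 0 < σ ξ)
    (hN : σ₀ ((1 + (ε : K)) * τ (1 + (ε : K))) ≤ σ₀ (ξ * τ ξ)) :
    ∃ α : 𝓞 K, (∀ σ : K →+* ℝ, 0 < σ (α : K)) ∧
      ∀ σ : K →+* ℝ, σ (α : K) ≤ σ ξ := by
  classical
  have hD0 : D ≠ 0 := by omega
  have hr0 : r ≠ 0 := by
    intro h; rw [h] at hr
    have : (D : K) = 0 := by simpa using hr.symm
    exact hD0 (by exact_mod_cast this)
  -- no rational square root of D
  have hnosq : ∀ q : ℚ, (q : ℚ) ^ 2 ≠ (D : ℚ) := by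
    intro q hq
    have hint : IsIntegral ℤ q := by
      refine ⟨Polynomial.X ^ 2 - Polynomial.C D, Polynomial.monic_X_pow_sub_C D (by norm_num), ?_⟩
      rw [Polynomial.eval₂_sub, Polynomial.eval₂_pow, Polynomial.eval₂_X, Polynomial.eval₂_C, hq]
      simp
    obtain ⟨n, hn⟩ := IsIntegrallyClosed.isIntegral_iff.mp hint
    have hnq : (n : ℚ) = q := by rw [← hn]; simp
    have hn2 : n * n = D := by
      have : ((n * n : ℤ) : ℚ) = ((D : ℤ) : ℚ) := by push_cast [hnq]; rw [← sq]; exact hq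
      exact_mod_cast this
    have : IsUnit n := hsf n ⟨1, by rw [← hn2]; ring⟩
    rcases Int.isUnit_iff.mp this with h | h <;> rw [h] at hn2 <;> omega
  -- r is irrational
  have hirr : ∀ q : ℚ, (q : K) ≠ r := by
    intro q hq
    apply hnosq q
    have : ((q : K)) ^ 2 = ((D : ℚ) : K) := by rw [hq, hr]; norm_cast
    exact_mod_cast this
  have hli : LinearIndependent ℚ ![1, r] := by
    rw [LinearIndependent.pair_iff]
    intro s t hst
    by_cases ht : t = 0
    · subst ht
      simp only [zero_smul, add_zero, smul_eq_mul, mul_one] at hst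
      have : (s : K) = 0 := by
        rw [Algebra.smul_def, eq_ratCast, mul_one] at hst; exact hst
      exact ⟨by exact_mod_cast this, rfl⟩
    · exfalso
      apply hirr (-s / t)
      rw [Algebra.smul_def, Algebra.smul_def, eq_ratCast, eq_ratCast, mul_one] at hst
      have htK : (t : K) ≠ 0 := by exact_mod_cast ht
      push_cast
      field_simp
      linear_combination -hst
  -- τ is an involution
  have hττ : ∀ x : K, τ (τ x) = x := by
    have := stmt11_ext hli hdeg (τ.comp τ) (RingHom.id K) (by simp [hτ])
    intro x; exact RingHom.congr_fun this x
  -- classification of real embeddings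
  set σ₁ : K →+* ℝ := σ₀.comp τ with hσ₁
  have hσ₁r : σ₁ r = -σ₀ r := by simp [hσ₁, hτ]
  have hclass : ∀ σ : K →+* ℝ, σ = σ₀ ∨ σ = σ₁ := by
    intro σ
    have h2 : σ r * σ r = σ₀ r * σ₀ r := by
      have e1 : σ r * σ r = (D : ℝ) := by rw [← map_mul, ← sq, hr, map_intCast]
      have e2 : σ₀ r * σ₀ r = (D : ℝ) := by rw [← map_mul, ← sq, hr, map_intCast]
      rw [e1, e2]
    rcases mul_self_eq_mul_self_iff.mp h2 with h | h
    · exact Or.inl (stmt11_ext hli hdeg σ σ₀ h)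
    · exact Or.inr (stmt11_ext hli hdeg σ σ₁ (by rw [hσ₁r, h]))
  -- τ preserves integrality
  have hτint : ∀ x : K, IsIntegral ℤ x → IsIntegral ℤ (τ x) := fun x hx => hx.map τ.toIntAlgHom
  set U : (𝓞 K)ˣ := hεu.unit with hU
  have hUε : (U : 𝓞 K) = ε := hεu.unit_spec
  have hUinv : (ε : K) * ((↑(U⁻¹) : 𝓞 K) : K) = 1 := by
    have h𝓞 : (U : 𝓞 K) * (↑(U⁻¹) : 𝓞 K) = 1 := by exact_mod_cast U.mul_inv
    have := congrArg (algebraMap (𝓞 K) K) h𝓞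
    rw [map_mul, map_one] at this
    simpa [hUε] using this
  -- the norm of ε is a positive rational unit, hence 1
  set u0 : K := (ε : K) * τ (ε : K) with hu0
  have hu0fix : τ u0 = u0 := by rw [hu0, map_mul, hττ, mul_comm]
  obtain ⟨a, b, hab⟩ := stmt11_repr hli hdeg u0
  have hb : b = 0 := by
    have h2 : τ u0 = (a : K) + (b : K) * (-r) := by
      rw [hab, map_add, map_mul, hτ, map_ratCast, map_ratCast]
    rw [hu0fix, hab] at h2
    have h3 : (2 : K) * ((b : K) * r) = 0 := by linear_combination h2
    have h4 : (b : K) * r = 0 := by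
      rcases mul_eq_zero.mp h3 with h | h
      · norm_num at h
      · exact h
    rcases mul_eq_zero.mp h4 with h | h
    · exact_mod_cast h
    · exact absurd h hr0
  have hau0 : (a : K) = u0 := by rw [hab, hb]; simp
  set w : K := ((↑(U⁻¹) : 𝓞 K) : K) * τ ((↑(U⁻¹) : 𝓞 K) : K) with hw
  have hu0w : u0 * w = 1 := by
    have : u0 * w = ((ε : K) * ((↑(U⁻¹) : 𝓞 K) : K)) * τ ((ε : K) * ((↑(U⁻¹) : 𝓞 K) : K)) := by
      rw [map_mul]; ring
    rw [this, hUinv, map_one, mul_one]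
  have hu0int : IsIntegral ℤ u0 := by
    apply IsIntegral.mul
    · exact RingOfIntegers.isIntegral_coe ε
    · exact hτint _ (RingOfIntegers.isIntegral_coe ε)
  have hwint : IsIntegral ℤ w := by
    apply IsIntegral.mul
    · exact RingOfIntegers.isIntegral_coe _
    · exact hτint _ (RingOfIntegers.isIntegral_coe _)
  have ha0 : a ≠ 0 := by
    intro h
    rw [h] at hau0
    rw [← hau0] at hu0w
    simp at hu0w
  have hwa : w = ((a⁻¹ : ℚ) : K) := by
    rw [Rat.cast_inv, hau0]
    exact (inv_eq_of_mul_eq_one_right hu0w).symm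
  have haint : IsIntegral ℤ a := by
    rw [← isIntegral_algebraMap_iff (algebraMap ℚ K).injective]
    rw [show algebraMap ℚ K a = (a : K) from eq_ratCast _ a, hau0]
    exact hu0int
  have hainv : IsIntegral ℤ (a⁻¹) := by
    rw [← isIntegral_algebraMap_iff (algebraMap ℚ K).injective]
    rw [show algebraMap ℚ K a⁻¹ = ((a⁻¹ : ℚ) : K) from eq_ratCast _ _, ← hwa]
    exact hwint
  obtain ⟨n, hn⟩ := IsIntegrallyClosed.isIntegral_iff.mp haint
  obtain ⟨m, hm⟩ := IsIntegrallyClosed.isIntegral_iff.mp hainv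
  have hnq : (n : ℚ) = a := by rw [← hn]; simp
  have hmq : (m : ℚ) = a⁻¹ := by rw [← hm]; simp
  have hnm : n * m = 1 := by
    have : ((n * m : ℤ) : ℚ) = 1 := by push_cast [hnq, hmq]; field_simp
    exact_mod_cast this
  -- positivity of a
  have hts0 : σ₀ u0 = (a : ℝ) := by rw [← hau0, map_ratCast]
  have hspos : 0 < σ₀ (τ (ε : K)) := hεpos σ₁
  have hts_pos : 0 < σ₀ u0 := by
    rw [hu0, map_mul]
    exact mul_pos (hεpos σ₀) hspos
  have ha1 : a = 1 := by
    have hn1 : n = 1 ∨ n = -1 := Int.isUnit_iff.mp (IsUnit.of_mul_eq_one m hnm)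
    have hapos : (0 : ℚ) < a := by
      have : (0 : ℝ) < (a : ℝ) := hts0 ▸ hts_pos
      exact_mod_cast this
    rcases hn1 with h | h
    · rw [← hnq, h]; norm_num
    · exfalso; rw [← hnq, h] at hapos; norm_num at hapos
  have hts : σ₀ (ε : K) * σ₀ (τ (ε : K)) = 1 := by
    have := hts0
    rw [ha1] at this
    rw [hu0, map_mul] at this
    simpa using this
  -- analytic finish
  set t : ℝ := σ₀ (ε : K) with htdef
  set sv : ℝ := σ₀ (τ (ε : K)) with hsdef
  have ht_pos : 0 < t := hεpos σ₀
  have hs_eq : sv = t⁻¹ := by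
    field_simp
    linarith [hts]
  set A : ℝ := σ₀ ξ with hAdef
  set Bv : ℝ := σ₁ ξ with hBdef
  have hA : 0 < A := hξpos σ₀
  have hB : 0 < Bv := hξpos σ₁
  have hBσ : Bv = σ₀ (τ ξ) := rfl
  have hAB : t ≤ A * Bv := by
    have h2 : A * Bv = σ₀ (ξ * τ ξ) := by rw [map_mul, hBσ]
    have h3 : σ₀ ((1 + (ε : K)) * τ (1 + (ε : K))) = (1 + t) * (1 + sv) := by
      simp only [map_mul, map_add, map_one, ← htdef, ← hsdef]
    have h4 := hN
    rw [h3, ← h2] at h4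
    nlinarith [hspos, hts]
  set k : ℤ := ⌈-Real.logb t Bv⌉ with hk
  have hαK : (((U ^ k : (𝓞 K)ˣ) : 𝓞 K) : K) = (ε : K) ^ k := by
    let φ : (𝓞 K)ˣ →* Kˣ := Units.map (algebraMap (𝓞 K) K : (𝓞 K) →+* K).toMonoidHom
    have h1 : (((U ^ k : (𝓞 K)ˣ) : 𝓞 K) : K) = ((φ (U ^ k) : Kˣ) : K) := rfl
    rw [h1, map_zpow φ U k, Units.val_zpow_eq_zpow_val]
    have h2 : ((φ U : Kˣ) : K) = (ε : K) := by
      show (((U : 𝓞 K) : K)) = (ε : K)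
      rw [hUε]
    rw [h2]
  have hval : ∀ σ : K →+* ℝ, σ (((U ^ k : (𝓞 K)ˣ) : 𝓞 K) : K) = σ (ε : K) ^ k := by
    intro σ; rw [hαK, map_zpow₀]
  refine ⟨↑(U ^ k), fun σ => ?_, fun σ => ?_⟩
  · rw [hval]
    exact zpow_pos (hεpos σ) k
  · rcases hclass σ with h | h
    · rw [h, hval σ₀]
      have hk1 : (k : ℝ) < -Real.logb t Bv + 1 := by
        simpa using Int.ceil_lt_add_one (-Real.logb t Bv)
      have step : t ^ k ≤ t / Bv := by
        calc t ^ k = t ^ ((k : ℤ) : ℝ) := (Real.rpow_intCast t k).symm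
          _ ≤ t ^ (-Real.logb t Bv + 1) := (Real.rpow_le_rpow_left_iff hεgt).mpr hk1.le
          _ = t ^ (-Real.logb t Bv) * t := by rw [Real.rpow_add ht_pos, Real.rpow_one]
          _ = (t ^ Real.logb t Bv)⁻¹ * t := by rw [Real.rpow_neg ht_pos.le]
          _ = Bv⁻¹ * t := by rw [Real.rpow_logb ht_pos (ne_of_gt hεgt) hB]
          _ = t / Bv := by ring
      calc t ^ k ≤ t / Bv := step
        _ ≤ A := by rw [div_le_iff₀ hB]; exact hAB
    · rw [h, hval σ₁]
      have hσ₁ε : σ₁ (ε : K) = sv := rfl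
      rw [hσ₁ε, hs_eq, inv_zpow, ← zpow_neg]
      have hk2 : -Real.logb t Bv ≤ (k : ℝ) := Int.le_ceil _
      calc t ^ (-k) = t ^ ((-k : ℤ) : ℝ) := (Real.rpow_intCast t (-k)).symm
        _ ≤ t ^ Real.logb t Bv := by
            apply (Real.rpow_le_rpow_left_iff hεgt).mpr
            push_cast
            linarith
        _ = Bv := Real.rpow_logb ht_pos (ne_of_gt hεgt) hB
end

section
/- Over the ring of integers ℤ[(1+√5)/2] of ℚ(√5), the binary quadratic form Q(x,y) = 2x² + 2xy + (3+√5)y² is totally positive definite with determinant 5 + 2√5, and is additively indecomposable as a classical form, but decomposable as a non-classical form: Q = 2·(x² + xy + ((3+√5)/2)y²), where x² + xy + ((3+√5)/2)y² is an integral form over ℤ[(1+√5)/2]. -/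
open NumberField

/-- `a x² + b xy + c y²` over `K` is totally positive definite. -/
def TPDK (K : Type*) [Field K] (a b c : K) : Prop :=
  ∀ σ : K →+* ℝ, ∀ u v : ℝ, (u ≠ 0 ∨ v ≠ 0) →
    0 < σ a * u ^ 2 + σ b * (u * v) + σ c * v ^ 2

lemma aux_quad (A B C : ℝ) (h : ∀ u v : ℝ, 0 ≤ A * u ^ 2 + B * (u * v) + C * v ^ 2) :
    0 ≤ A ∧ 0 ≤ C ∧ B ^ 2 ≤ 4 * (A * C) := by
  have hA : 0 ≤ A := by have := h 1 0; simpa using this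
  have hC : 0 ≤ C := by have := h 0 1; simpa using this
  refine ⟨hA, hC, ?_⟩
  rcases hA.eq_or_lt with hA0 | hA0
  · have hB : B = 0 := by
      by_contra hB
      have h1 := h (-(C + 1) / B) 1
      have e : B * (-(C + 1) / B * 1) = -(C + 1) := by field_simp
      rw [← hA0, e] at h1
      nlinarith
    rw [hB, ← hA0]; norm_num
  · have h2 := h (-B) (2 * A)
    nlinarith

lemma aux_aone (x y : ℝ) (m n n' : ℤ) (hx : 0 < x) (hy : 0 < y)
    (hx2 : x < 2) (hy2 : y < 2) (hm : x + y = m) (hn : x * y = n)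
    (hn' : (2 - x) * (2 - y) = n') : x = 1 ∧ y = 1 := by
  have hn1 : 1 ≤ n := by
    have h0 : (0:ℝ) < n := hn ▸ mul_pos hx hy
    have : (0:ℤ) < n := by exact_mod_cast h0
    omega
  have hn'1 : 1 ≤ n' := by
    have h0 : (0:ℝ) < n' := hn' ▸ mul_pos (by linarith) (by linarith)
    have : (0:ℤ) < n' := by exact_mod_cast h0
    omega
  have hmp : 0 < m := by
    have : (0:ℝ) < m := by rw [← hm]; linarith
    exact_mod_cast this
  have hd1 : 4 * (n:ℝ) ≤ (m:ℝ) ^ 2 := by nlinarith [sq_nonneg (x - y)]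
  have hd1' : 4 * n ≤ m ^ 2 := by exact_mod_cast hd1
  have hm2 : 2 ≤ m := by nlinarith
  have hd2 : 4 * (n':ℝ) ≤ (4 - (m:ℝ)) ^ 2 := by nlinarith [sq_nonneg (x - y)]
  have hd2' : 4 * n' ≤ (4 - m) ^ 2 := by exact_mod_cast hd2
  have hm4 : m < 4 := by
    have : (m:ℝ) < 4 := by rw [← hm]; linarith
    exact_mod_cast this
  have hmle : m ≤ 2 := by nlinarith
  have hmeq : m = 2 := le_antisymm hmle hm2
  subst hmeq
  have hne : n = 1 := by omega
  subst hne
  norm_num at hm hn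
  constructor <;> nlinarith [sq_nonneg (x - y)]

lemma aux_caseA (s5 u v : ℝ) (m n : ℤ) (h5 : s5 ^ 2 = 5) (hp : 0 < s5)
    (hu : 0 < u) (hv : 0 < v) (hu' : u ≤ 5 / 2 + s5) (hv' : v ≤ 5 / 2 - s5)
    (hm : u + v = m) (hn : u * v = n) : False := by
  have hs2 : 2 < s5 := by nlinarith
  have hs9 : s5 < 9 / 4 := by nlinarith
  have hn0 : (0:ℝ) < n := hn ▸ mul_pos hu hv
  have hn54 : (n:ℝ) ≤ 5 / 4 := by nlinarith
  have hn1 : n = 1 := by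
    have h1 : (0:ℤ) < n := by exact_mod_cast hn0
    have h2 : (n:ℝ) < 2 := by linarith
    have h3 : n < 2 := by exact_mod_cast h2
    omega
  have huv1 : u * v = 1 := by rw [hn, hn1]; norm_num
  -- 4 < u + v
  have hv2 : s5 - 1/2 ≤ 2 - v := by linarith
  have h3 : 3 < (2 - v) ^ 2 := by nlinarith
  have key : (u + v - 4) * v = (2 - v) ^ 2 - 3 := by linear_combination huv1
  have h4 : 4 < u + v := by nlinarith
  -- u + v < 5
  have hu_lb : 5 / 2 - s5 ≤ u := by linarith
  have hquad : 0 ≤ (5 / 2 + s5 - u) * (u - (5 / 2 - s5)) :=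
    mul_nonneg (by linarith) (by linarith)
  have key2 : (5 - (u + v)) * u = -(u ^ 2 - 5 * u + 1) := by linear_combination -huv1
  have hpos2 : 0 < (5 - (u + v)) * u := by nlinarith
  have h5' : u + v < 5 := by nlinarith
  have i1 : (4:ℤ) < m := by exact_mod_cast hm ▸ h4
  have i2 : m < 5 := by exact_mod_cast hm ▸ h5'
  omega

lemma aux_bcase (s5 s t : ℝ) (m n : ℤ) (h5 : s5 ^ 2 = 5) (hp : 0 < s5)
    (h1 : s ^ 2 + (1 - s) ^ 2 ≤ 3 + s5) (h2 : t ^ 2 + (1 - t) ^ 2 ≤ 3 - s5)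
    (hm : s + t = m) (hn : s * t = n) : False := by
  have hs2 : 2 < s5 := by nlinarith
  have hs9 : s5 < 9 / 4 := by nlinarith
  have ht0 : 0 < t := by nlinarith
  have ht1 : t < 1 := by nlinarith
  have htlb : (s5 - 2) / 2 ≤ t := by nlinarith
  have htub : t ≤ 1 - (s5 - 2) / 2 := by nlinarith
  have hml : (-1:ℝ) < s + t := by
    by_contra hcon
    push_neg at hcon
    have hs : s ≤ -(s5 / 2) := by linarith
    nlinarith
  have hmu : s + t < 3 := by
    by_contra hcon
    push_neg at hcon
    have hs : 1 + s5 / 2 ≤ s := by linarith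
    nlinarith
  have i1 : (-1:ℤ) < m := by exact_mod_cast hm ▸ hml
  have i2 : m < 3 := by exact_mod_cast hm ▸ hmu
  have hseq : s = (m:ℝ) - t := by linarith
  have hcases : m = 0 ∨ m = 1 ∨ m = 2 := by omega
  rcases hcases with h | h | h <;> subst h <;> push_cast at hseq
  · -- n = -t^2 ∈ (-1, 0)
    have hq1 : 0 < t * t := mul_pos ht0 ht0
    have hq2 : 0 < (1 - t) * (1 + t) := mul_pos (by linarith) (by linarith)
    have e1 : (n:ℝ) < 0 := by rw [← hn, hseq]; linarith [hq1]
    have e2 : (-1:ℝ) < n := by rw [← hn, hseq]; linarith [hq2]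
    have : (0:ℤ) ≤ n ∨ n ≤ -1 := by omega
    rcases this with h' | h'
    · have : (0:ℝ) ≤ n := by exact_mod_cast h'
      linarith
    · have : (n:ℝ) ≤ -1 := by exact_mod_cast h'
      linarith
  · have hq1 : 0 < (1 - t) * t := mul_pos (by linarith) ht0
    have e1 : (0:ℝ) < n := by rw [← hn, hseq]; linarith [hq1]
    have e2 : (n:ℝ) < 1 := by rw [← hn, hseq]; nlinarith [hq1, sq_nonneg (1 - 2*t)]
    have : n ≤ 0 ∨ 1 ≤ n := by omega
    rcases this with h' | h'
    · have : (n:ℝ) ≤ 0 := by exact_mod_cast h'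
      linarith
    · have : (1:ℝ) ≤ n := by exact_mod_cast h'
      linarith
  · have hq1 : 0 < (2 - t) * t := mul_pos (by linarith) ht0
    have e1 : (0:ℝ) < n := by rw [← hn, hseq]; linarith [hq1]
    have hq : 0 < (1 - t) * (1 - t) := mul_pos (by linarith) (by linarith)
    have e2 : (n:ℝ) < 1 := by rw [← hn, hseq]; linarith [hq]
    have : n ≤ 0 ∨ 1 ≤ n := by omega
    rcases this with h' | h'
    · have : (n:ℝ) ≤ 0 := by exact_mod_cast h'
      linarith
    · have : (1:ℝ) ≤ n := by exact_mod_cast h'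
      linarith

set_option maxHeartbeats 4000000 in
/-- Over the ring of integers of `K = ℚ(√5)`, the form
`Q(x,y) = 2x² + 2xy + (3+√5)y²` is totally positive definite, has determinant
`2·(3+√5) − 1 = 5 + 2√5`, is additively indecomposable as a classical form, but
decomposes non-classically as `Q = 2·(x² + xy + ((3+√5)/2)y²)`, the form
`x² + xy + ((3+√5)/2)y²` being an integral totally positive semi-definite form. -/
theorem stmt14 (K : Type*) [Field K] [NumberField K] (r : K) (hr : r ^ 2 = 5)
    (hdeg : Module.finrank ℚ K = 2)
    (c h : 𝓞 K) (hc : (c : K) = 3 + r) (hh : (h : K) = (3 + r) / 2) :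
    TPDK K 2 2 (c : K) ∧
    2 * (c : K) - 1 ^ 2 = 5 + 2 * r ∧
    (¬ ∃ a₁ b₁ c₁ a₂ b₂ c₂ : 𝓞 K,
      TPSDK K a₁ (2 * b₁) c₁ ∧ TPSDK K a₂ (2 * b₂) c₂ ∧
      ¬(a₁ = 0 ∧ b₁ = 0 ∧ c₁ = 0) ∧ ¬(a₂ = 0 ∧ b₂ = 0 ∧ c₂ = 0) ∧
      a₁ + a₂ = 2 ∧ b₁ + b₂ = 1 ∧ c₁ + c₂ = c) ∧
    (c = h + h ∧ TPSDK K 1 1 (h : K) ∧ ¬((1 : 𝓞 K) = 0 ∧ (1 : 𝓞 K) = 0 ∧ h = 0)) := by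
  have hs5 : (Real.sqrt 5) ^ 2 = 5 := Real.sq_sqrt (by norm_num)
  have hs5pos : 0 < Real.sqrt 5 := Real.sqrt_pos.mpr (by norm_num)
  have irr5 : Irrational (Real.sqrt 5) := by
    simpa using Nat.prime_five.irrational_sqrt
  have hq5 : ∀ q : ℚ, q ^ 2 ≠ 5 := by
    intro q hq
    have h1 : ((q:ℝ)) ^ 2 = 5 := by exact_mod_cast hq
    refine irr5 ⟨|q|, ?_⟩
    have h2 : ((|q|:ℚ):ℝ) = |(q:ℝ)| := by push_cast; ring
    rw [h2, ← Real.sqrt_sq_eq_abs, h1]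
  have li : LinearIndependent ℚ ![(1:K), r] := by
    rw [LinearIndependent.pair_iff]
    intro p q hpq
    have hK : (p:K) + (q:K) * r = 0 := by
      have e1 : p • (1:K) = (p:K) := by rw [Algebra.smul_def, eq_ratCast, mul_one]
      have e2 : q • r = (q:K) * r := by rw [Algebra.smul_def, eq_ratCast]
      rw [e1, e2] at hpq; exact hpq
    by_cases hq0 : q = 0
    · subst hq0
      push_cast at hK
      simp at hK
      exact ⟨by exact_mod_cast hK, rfl⟩
    · exfalso
      have hqK : (q:K) ≠ 0 := by exact_mod_cast hq0
      have hr' : r = ((-p/q : ℚ) : K) := by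
        push_cast
        field_simp
        linear_combination hK
      apply hq5 (-p/q)
      have h2 : (((-p/q : ℚ) : K)) ^ 2 = ((5:ℚ):K) := by
        rw [← hr', hr]; norm_num
      exact_mod_cast h2
  obtain ⟨B, hB0, hB1⟩ : ∃ B : Module.Basis (Fin 2) ℚ K, B 0 = 1 ∧ B 1 = r := by
    refine ⟨basisOfLinearIndependentOfCardEqFinrank li (by simp [hdeg]), ?_, ?_⟩ <;>
      simp [coe_basisOfLinearIndependentOfCardEqFinrank]
  have hxPQ : ∀ x : K, x = (B.repr x 0 : ℚ) • (1:K) + (B.repr x 1 : ℚ) • r := by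
    intro x
    have h := B.sum_repr x
    rw [Fin.sum_univ_two, hB0, hB1] at h
    exact h.symm
  have hco : ∀ p q : ℚ, B.repr (p • (1:K) + q • r) 0 = p ∧ B.repr (p • (1:K) + q • r) 1 = q := by
    intro p q
    rw [← hB0, ← hB1]
    constructor <;> simp [Finsupp.single_apply]
  have mk : ∀ e : ℝ, e ^ 2 = 5 →
      ∃ σ : K →+* ℝ, ∀ x : K, σ x = (B.repr x 0 : ℝ) + (B.repr x 1 : ℝ) * e := by
    intro e he
    refine ⟨{ toFun := fun x => (B.repr x 0 : ℝ) + (B.repr x 1 : ℝ) * e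
            , map_one' := ?_, map_mul' := ?_, map_zero' := ?_, map_add' := ?_ },
      fun _ => rfl⟩
    · show (B.repr 1 0 : ℝ) + (B.repr 1 1 : ℝ) * e = 1
      have e1 : (1:ℚ) • (1:K) + (0:ℚ) • r = 1 := by simp
      have h := hco 1 0
      rw [e1] at h
      rw [h.1, h.2]; norm_num
    · intro x y
      show (B.repr (x*y) 0 : ℝ) + (B.repr (x*y) 1 : ℝ) * e
          = ((B.repr x 0 : ℝ) + (B.repr x 1 : ℝ) * e) * ((B.repr y 0 : ℝ) + (B.repr y 1 : ℝ) * e)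
      set px := B.repr x 0; set qx := B.repr x 1
      set py := B.repr y 0; set qy := B.repr y 1
      have sm : ∀ (a:ℚ) (z:K), a • z = (a:K) * z := fun a z => by
        rw [Algebra.smul_def, eq_ratCast]
      have hxy : x * y = (px*py + 5*(qx*qy)) • (1:K) + (px*qy + qx*py) • r := by
        conv_lhs => rw [hxPQ x, hxPQ y]
        rw [sm, sm, sm, sm, sm, sm]
        push_cast
        linear_combination ((qx:K) * (qy:K)) * hr
      have h := hco (px*py + 5*(qx*qy)) (px*qy + qx*py)
      rw [← hxy] at h
      rw [h.1, h.2]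
      push_cast
      linear_combination (-(qx:ℝ) * (qy:ℝ)) * he
    · show (B.repr 0 0 : ℝ) + (B.repr 0 1 : ℝ) * e = 0
      simp
    · intro x y
      show (B.repr (x+y) 0 : ℝ) + (B.repr (x+y) 1 : ℝ) * e
          = ((B.repr x 0 : ℝ) + (B.repr x 1 : ℝ) * e) + ((B.repr y 0 : ℝ) + (B.repr y 1 : ℝ) * e)
      rw [map_add]
      push_cast [Finsupp.add_apply]
      ring
  obtain ⟨σ₁, hσ₁⟩ := mk (Real.sqrt 5) hs5
  obtain ⟨σ₂, hσ₂⟩ := mk (-Real.sqrt 5) (by rw [neg_pow]; simp [hs5])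
  have hrco : B.repr r 0 = 0 ∧ B.repr r 1 = 1 := by
    have e2 : (0:ℚ) • (1:K) + (1:ℚ) • r = r := by simp
    have h := hco 0 1
    rw [e2] at h
    exact h
  have hσ₁r : σ₁ r = Real.sqrt 5 := by rw [hσ₁ r, hrco.1, hrco.2]; norm_num
  have hσ₂r : σ₂ r = -Real.sqrt 5 := by rw [hσ₂ r, hrco.1, hrco.2]; norm_num
  -- trace and norm integrality
  have TN : ∀ x : 𝓞 K, ∃ m n : ℤ,
      σ₁ (x:K) + σ₂ (x:K) = m ∧ σ₁ (x:K) * σ₂ (x:K) = n := by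
    intro x
    set p := B.repr (x:K) 0 with hp
    set q := B.repr (x:K) 1 with hq
    have e1 : σ₁ (x:K) = (p:ℝ) + (q:ℝ) * Real.sqrt 5 := hσ₁ _
    have e2 : σ₂ (x:K) = (p:ℝ) + (q:ℝ) * (-Real.sqrt 5) := hσ₂ _
    have hint : IsIntegral ℤ ((x:K)) := RingOfIntegers.isIntegral_coe x
    have i1 : IsIntegral ℤ (σ₁ (x:K)) := hint.map σ₁.toIntAlgHom
    have i2 : IsIntegral ℤ (σ₂ (x:K)) := hint.map σ₂.toIntAlgHom
    have hsq : ∀ a : ℚ, IsIntegral ℤ ((a:ℝ)) → ∃ m : ℤ, (m:ℚ) = a := by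
      intro a ha
      have h0 : ((a:ℝ)) = algebraMap ℚ ℝ a := (eq_ratCast (algebraMap ℚ ℝ) a).symm
      rw [h0] at ha
      have h1 : IsIntegral ℤ a :=
        (isIntegral_algebraMap_iff (algebraMap ℚ ℝ).injective).mp ha
      obtain ⟨m, hm⟩ := IsIntegrallyClosed.isIntegral_iff.mp h1
      exact ⟨m, by exact_mod_cast hm⟩
    have isum : IsIntegral ℤ (((2*p : ℚ) : ℝ)) := by
      have h : ((2*p:ℚ):ℝ) = σ₁ (x:K) + σ₂ (x:K) := by rw [e1, e2]; push_cast; ring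
      rw [h]; exact i1.add i2
    have iprod : IsIntegral ℤ (((p^2 - 5*q^2 : ℚ) : ℝ)) := by
      have h : ((p^2-5*q^2:ℚ):ℝ) = σ₁ (x:K) * σ₂ (x:K) := by
        rw [e1, e2]; push_cast
        linear_combination ((q:ℝ)^2) * hs5
      rw [h]; exact i1.mul i2
    obtain ⟨m, hm⟩ := hsq _ isum
    obtain ⟨n, hn⟩ := hsq _ iprod
    refine ⟨m, n, ?_, ?_⟩
    · rw [e1, e2]
      have : ((m:ℚ):ℝ) = ((2*p:ℚ):ℝ) := by exact_mod_cast congrArg (fun z : ℚ => (z:ℝ)) hm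
      push_cast at this ⊢
      linarith
    · rw [e1, e2]
      have : ((n:ℚ):ℝ) = ((p^2-5*q^2:ℚ):ℝ) := by exact_mod_cast congrArg (fun z : ℚ => (z:ℝ)) hn
      push_cast at this ⊢
      linear_combination -this - ((q:ℝ)^2) * hs5
  have hzero1 : ∀ x : 𝓞 K, σ₁ (x:K) = 0 → x = 0 := by
    intro x hx
    have hK : (x:K) = 0 := σ₁.injective (by rw [hx, map_zero])
    exact_mod_cast hK
  have hzero2 : ∀ x : 𝓞 K, σ₂ (x:K) = 0 → x = 0 := by
    intro x hx
    have hK : (x:K) = 0 := σ₂.injective (by rw [hx, map_zero])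
    exact_mod_cast hK
  have hesq : ∀ σ : K →+* ℝ, (σ r) ^ 2 = 5 := by
    intro σ
    rw [← map_pow, hr]
    exact map_ofNat σ 5
  have hbnd : ∀ σ : K →+* ℝ, -(9/4 : ℝ) < σ r := by
    intro σ
    nlinarith [hesq σ]
  refine ⟨?_, ?_, ?_, ?_, ?_, ?_⟩
  · -- TPDK
    intro σ u v huv
    have h2 : σ (2:K) = 2 := map_ofNat σ 2
    have hcσ : σ (c:K) = 3 + σ r := by rw [hc, map_add, map_ofNat]
    rw [h2, hcσ]
    rcases eq_or_ne v 0 with hv | hv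
    · subst hv
      rcases huv with hu | hu
      · have h1 : 0 < u * u := mul_self_pos.mpr hu
        nlinarith [h1]
      · exact absurd rfl hu
    · have h1 : 0 < v * v := mul_self_pos.mpr hv
      nlinarith [sq_nonneg (2*u + v), mul_pos (show (0:ℝ) < 5/2 + σ r by linarith [hbnd σ]) h1]
  · -- determinant
    rw [hc]; ring
  · -- indecomposability
    rintro ⟨a₁, b₁, c₁, a₂, b₂, c₂, H1, H2, hnz1, hnz2, hA, hB, hCsum⟩
    have hAK : (a₁:K) + (a₂:K) = 2 := by
      have := congrArg (algebraMap (𝓞 K) K) hA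
      push_cast at this; exact this
    have hBK : (b₁:K) + (b₂:K) = 1 := by
      have := congrArg (algebraMap (𝓞 K) K) hB
      push_cast at this; exact this
    have hCK : (c₁:K) + (c₂:K) = 3 + r := by
      have := congrArg (algebraMap (𝓞 K) K) hCsum
      push_cast at this; exact this.trans hc
    obtain ⟨hA11, hC11, hB11⟩ := aux_quad _ _ _ (H1 σ₁)
    obtain ⟨hA12, hC12, hB12⟩ := aux_quad _ _ _ (H1 σ₂)
    obtain ⟨hA21, hC21, hB21⟩ := aux_quad _ _ _ (H2 σ₁)
    obtain ⟨hA22, hC22, hB22⟩ := aux_quad _ _ _ (H2 σ₂)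
    rw [map_mul, map_ofNat] at hB11 hB12 hB21 hB22
    -- linear relations under the embeddings
    have sA1 : σ₁ (a₁:K) + σ₁ (a₂:K) = 2 := by rw [← map_add, hAK]; exact map_ofNat σ₁ 2
    have sA2 : σ₂ (a₁:K) + σ₂ (a₂:K) = 2 := by rw [← map_add, hAK]; exact map_ofNat σ₂ 2
    have sB1 : σ₁ (b₁:K) + σ₁ (b₂:K) = 1 := by rw [← map_add, hBK]; exact map_one σ₁
    have sB2 : σ₂ (b₁:K) + σ₂ (b₂:K) = 1 := by rw [← map_add, hBK]; exact map_one σ₂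
    have sC1 : σ₁ (c₁:K) + σ₁ (c₂:K) = 3 + Real.sqrt 5 := by
      rw [← map_add, hCK, map_add, hσ₁r, map_ofNat]
    have sC2 : σ₂ (c₁:K) + σ₂ (c₂:K) = 3 - Real.sqrt 5 := by
      rw [← map_add, hCK, map_add, hσ₂r, map_ofNat]; ring
    by_cases h1z : a₁ = 0
    · -- first form has a₁ = 0, hence b₁ = 0, c₁ ≠ 0
      have hA10 : (a₁:K) = 0 := by exact_mod_cast h1z
      have z1 : σ₁ (a₁:K) = 0 := by rw [hA10, map_zero]
      have z2 : σ₂ (a₁:K) = 0 := by rw [hA10, map_zero]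
      have hb1 : b₁ = 0 := by
        apply hzero1
        rw [z1, zero_mul, mul_zero] at hB11
        have hle : (σ₁ (b₁:K))^2 ≤ 0 := by nlinarith [hB11]
        exact sq_eq_zero_iff.mp (le_antisymm hle (sq_nonneg _))
      have hc1 : c₁ ≠ 0 := fun hcz => hnz1 ⟨h1z, hb1, hcz⟩
      have hb2K : σ₁ (b₂:K) = 1 ∧ σ₂ (b₂:K) = 1 := by
        have : (b₂:K) = 1 := by
          have hb10 : (b₁:K) = 0 := by exact_mod_cast hb1
          rw [hb10, zero_add] at hBK; exact hBK
        rw [this]; exact ⟨map_one σ₁, map_one σ₂⟩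
      have ha2K : σ₁ (a₂:K) = 2 ∧ σ₂ (a₂:K) = 2 := by
        constructor <;> linarith [sA1, sA2]
      have k1 : (1:ℝ)/2 ≤ σ₁ (c₂:K) := by nlinarith [hB21, hb2K.1, ha2K.1]
      have k2 : (1:ℝ)/2 ≤ σ₂ (c₂:K) := by nlinarith [hB22, hb2K.2, ha2K.2]
      have hu : 0 < σ₁ (c₁:K) :=
        lt_of_le_of_ne hC11 (fun hh0 => hc1 (hzero1 c₁ hh0.symm))
      have hv : 0 < σ₂ (c₁:K) :=
        lt_of_le_of_ne hC12 (fun hh0 => hc1 (hzero2 c₁ hh0.symm))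
      obtain ⟨m, n, hm, hn⟩ := TN c₁
      exact aux_caseA (Real.sqrt 5) _ _ m n hs5 hs5pos hu hv
        (by linarith [sC1, k1]) (by linarith [sC2, k2]) hm hn
    · by_cases h2z : a₂ = 0
      · -- second form has a₂ = 0
        have hA20 : (a₂:K) = 0 := by exact_mod_cast h2z
        have z1 : σ₁ (a₂:K) = 0 := by rw [hA20, map_zero]
        have z2 : σ₂ (a₂:K) = 0 := by rw [hA20, map_zero]
        have hb2 : b₂ = 0 := by
          apply hzero1
          rw [z1, zero_mul, mul_zero] at hB21
          have hle : (σ₁ (b₂:K))^2 ≤ 0 := by nlinarith [hB21]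
          exact sq_eq_zero_iff.mp (le_antisymm hle (sq_nonneg _))
        have hc2 : c₂ ≠ 0 := fun hcz => hnz2 ⟨h2z, hb2, hcz⟩
        have hb1K : σ₁ (b₁:K) = 1 ∧ σ₂ (b₁:K) = 1 := by
          have : (b₁:K) = 1 := by
            have hb20 : (b₂:K) = 0 := by exact_mod_cast hb2
            rw [hb20, add_zero] at hBK; exact hBK
          rw [this]; exact ⟨map_one σ₁, map_one σ₂⟩
        have ha1K : σ₁ (a₁:K) = 2 ∧ σ₂ (a₁:K) = 2 := by
          constructor <;> linarith [sA1, sA2]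
        have k1 : (1:ℝ)/2 ≤ σ₁ (c₁:K) := by nlinarith [hB11, hb1K.1, ha1K.1]
        have k2 : (1:ℝ)/2 ≤ σ₂ (c₁:K) := by nlinarith [hB12, hb1K.2, ha1K.2]
        have hu : 0 < σ₁ (c₂:K) :=
          lt_of_le_of_ne hC21 (fun hh0 => hc2 (hzero1 c₂ hh0.symm))
        have hv : 0 < σ₂ (c₂:K) :=
          lt_of_le_of_ne hC22 (fun hh0 => hc2 (hzero2 c₂ hh0.symm))
        obtain ⟨m, n, hm, hn⟩ := TN c₂
        exact aux_caseA (Real.sqrt 5) _ _ m n hs5 hs5pos hu hv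
          (by linarith [sC1, k1]) (by linarith [sC2, k2]) hm hn
      · -- both a₁, a₂ nonzero : a₁ = a₂ = 1 under the embeddings
        have p11 : 0 < σ₁ (a₁:K) :=
          lt_of_le_of_ne hA11 (fun hh0 => h1z (hzero1 a₁ hh0.symm))
        have p12 : 0 < σ₂ (a₁:K) :=
          lt_of_le_of_ne hA12 (fun hh0 => h1z (hzero2 a₁ hh0.symm))
        have p21 : 0 < σ₁ (a₂:K) :=
          lt_of_le_of_ne hA21 (fun hh0 => h2z (hzero1 a₂ hh0.symm))
        have p22 : 0 < σ₂ (a₂:K) :=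
          lt_of_le_of_ne hA22 (fun hh0 => h2z (hzero2 a₂ hh0.symm))
        obtain ⟨m, n, hm, hn⟩ := TN a₁
        obtain ⟨m2, n2, hm2, hn2⟩ := TN a₂
        obtain ⟨e1, e2⟩ := aux_aone (σ₁ (a₁:K)) (σ₂ (a₁:K)) m n n2 p11 p12
          (by linarith [sA1]) (by linarith [sA2]) hm hn
          (by rw [show (2:ℝ) - σ₁ (a₁:K) = σ₁ (a₂:K) by linarith [sA1],
                  show (2:ℝ) - σ₂ (a₁:K) = σ₂ (a₂:K) by linarith [sA2]]; exact hn2)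
        have f1 : σ₁ (a₂:K) = 1 := by linarith [sA1]
        have f2 : σ₂ (a₂:K) = 1 := by linarith [sA2]
        obtain ⟨mb, nb, hmb, hnb⟩ := TN b₁
        refine aux_bcase (Real.sqrt 5) (σ₁ (b₁:K)) (σ₂ (b₁:K)) mb nb hs5 hs5pos ?_ ?_ hmb hnb
        · have k1 : (σ₁ (b₁:K))^2 ≤ σ₁ (a₁:K) * σ₁ (c₁:K) := by nlinarith [hB11]
          have k2 : (σ₁ (b₂:K))^2 ≤ σ₁ (a₂:K) * σ₁ (c₂:K) := by nlinarith [hB21]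
          rw [e1, one_mul] at k1
          rw [f1, one_mul] at k2
          have hb2e : σ₁ (b₂:K) = 1 - σ₁ (b₁:K) := by linarith [sB1]
          rw [hb2e] at k2
          linarith [sC1]
        · have k1 : (σ₂ (b₁:K))^2 ≤ σ₂ (a₁:K) * σ₂ (c₁:K) := by nlinarith [hB12]
          have k2 : (σ₂ (b₂:K))^2 ≤ σ₂ (a₂:K) * σ₂ (c₂:K) := by nlinarith [hB22]
          rw [e2, one_mul] at k1
          rw [f2, one_mul] at k2
          have hb2e : σ₂ (b₂:K) = 1 - σ₂ (b₁:K) := by linarith [sB2]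
          rw [hb2e] at k2
          linarith [sC2]
  · -- c = h + h
    apply NumberField.RingOfIntegers.ext
    show (c : K) = ((h + h : 𝓞 K) : K)
    have e1 : ((h + h : 𝓞 K) : K) = (h:K) + (h:K) := map_add (algebraMap (𝓞 K) K) h h
    rw [e1, hc, hh]
    ring
  · -- TPSDK 1 1 h
    intro σ u v
    have hhσ : σ (h:K) = (3 + σ r)/2 := by rw [hh, map_div₀, map_add, map_ofNat, map_ofNat]
    rw [map_one, hhσ]
    nlinarith [sq_nonneg (2*u + v),
      mul_nonneg (show (0:ℝ) ≤ 5 + 2 * σ r by linarith [hbnd σ]) (sq_nonneg v)]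
  · rintro ⟨h1, -, -⟩
    exact one_ne_zero h1
end

section
/- Let D ≡ 5 (mod 12) be square-free with D > 17. Then the classical binary quadratic form Q(x,y) = 3x² + 2(3+√D)xy + ((D+10)/3 + 2√D)y² over O_{ℚ(√D)} has determinant 1 and is additively indecomposable as a classical form. -/
open NumberField Polynomial IntermediateField

lemma ratden (d : ℤ) (hd : Squarefree d) (y : ℚ) (k : ℤ) (h : y^2 * (d:ℚ) = (k:ℚ)) :
    ∃ m : ℤ, y = (m:ℚ) := by
  refine ⟨y.num, ?_⟩
  have hy : (y.den : ℚ) ≠ 0 := by exact_mod_cast y.den_nz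
  have h2 : (y.num:ℚ)^2 * d = k * (y.den:ℚ)^2 := by
    rw [← Rat.num_div_den y] at h
    field_simp at h
    linarith [h]
  have h3 : (y.num)^2 * d = k * (y.den:ℤ)^2 := by exact_mod_cast h2
  have hcop : IsCoprime (y.den : ℤ) y.num := by
    rw [Int.isCoprime_iff_gcd_eq_one, Int.gcd]
    simpa using y.reduced.symm
  have hdvd : (y.den:ℤ)^2 ∣ y.num^2 * d := ⟨k, by linarith [h3]⟩
  have hdvd2 : (y.den:ℤ)^2 ∣ d := (hcop.pow (n := 2) (m := 2)).dvd_of_dvd_mul_left hdvd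
  have : IsUnit (y.den : ℤ) := hd _ (by rwa [← sq])
  have hone : y.den = 1 := by
    rcases Int.isUnit_iff.mp this with h' | h' <;> omega
  conv_lhs => rw [← Rat.num_div_den y, hone]
  simp

lemma psd3 {A B C : ℝ} (h : ∀ u v : ℝ, 0 ≤ A * u ^ 2 + 2 * B * (u * v) + C * v ^ 2) :
    0 ≤ A ∧ 0 ≤ C ∧ B ^ 2 ≤ A * C := by
  have hA : 0 ≤ A := by simpa using h 1 0
  have hC : 0 ≤ C := by simpa using h 0 1
  refine ⟨hA, hC, ?_⟩
  rcases eq_or_lt_of_le hA with hA0 | hA0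
  · have hB : B = 0 := by
      by_contra hB
      have h2 : 2 * B * ((-(C + 1) / (2 * B)) * 1) = -(C+1) := by
        field_simp
      have := h (-(C + 1) / (2 * B)) 1
      rw [h2, ← hA0] at this
      simp at this
      linarith
    rw [hB, ← hA0]
    norm_num
  · have := h B (-A)
    nlinarith

lemma caseA_real {A₁ B₁ C₁ A₂ B₂ C₂ : ℝ} (hA₁ : 0 ≤ A₁) (hC₁ : 0 ≤ C₁) (hA₂ : 0 ≤ A₂)
    (hC₂ : 0 ≤ C₂) (hd₁ : A₁ * C₁ - B₁ ^ 2 = 1) (hd₂ : A₂ * C₂ - B₂ ^ 2 = 0)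
    (hcr : A₁ * C₂ + A₂ * C₁ - 2 * (B₁ * B₂) = 0) :
    A₂ = 0 ∧ B₂ = 0 ∧ C₂ = 0 := by
  have e1 : (A₁ * C₂ + A₂ * C₁)^2 = (2 * (B₁ * B₂))^2 := by
    rw [show A₁ * C₂ + A₂ * C₁ = 2 * (B₁ * B₂) by linarith]
  have e2 : (A₁ * C₁) * (A₂ * C₂) = (1 + B₁^2) * B₂^2 := by
    rw [show A₁ * C₁ = 1 + B₁^2 by linarith, show A₂ * C₂ = B₂^2 by linarith]
  have h1 : B₂ ^ 2 ≤ 0 := by nlinarith [sq_nonneg (A₁ * C₂ - A₂ * C₁)]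
  have hB₂ : B₂ = 0 := by
    have := sq_nonneg B₂
    nlinarith
  rw [hB₂] at hcr
  ring_nf at hcr
  have hA₁pos : 0 < A₁ := by
    rcases eq_or_lt_of_le hA₁ with h' | h'
    · nlinarith [sq_nonneg B₁]
    · exact h'
  have hC₁pos : 0 < C₁ := by
    rcases eq_or_lt_of_le hC₁ with h' | h'
    · nlinarith [sq_nonneg B₁]
    · exact h'
  have hC₂0 : C₂ = 0 := by nlinarith [mul_nonneg hA₂ hC₁, mul_nonneg hA₁ hC₂]
  have hA₂0 : A₂ = 0 := by nlinarith [mul_nonneg hA₁ hC₂, mul_nonneg hA₂ hC₁]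
  exact ⟨hA₂0, hB₂, hC₂0⟩

/-- For an algebraic integer `x` in a number field which is not rational and satisfies
`x² + a₁ x + a₀ = 0` with rational `a₁ a₀`, the coefficients are integers. -/
lemma int_coeffs {K : Type*} [Field K] [NumberField K] (x : K) (a1 a0 : ℚ)
    (hx : IsIntegral ℤ x) (hnrx : x ∉ Set.range (algebraMap ℚ K))
    (hev : x ^ 2 + (a1 : K) * x + (a0 : K) = 0) :
    (∃ s : ℤ, a1 = s) ∧ (∃ n : ℤ, a0 = n) := by
  set g : ℚ[X] := X ^ 2 + C a1 * X + C a0 with hg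
  have hmon : g.Monic := by
    rw [hg, add_assoc]
    apply (monic_X_pow 2).add_of_left
    rw [degree_X_pow]
    refine lt_of_le_of_lt (degree_add_le _ _) ?_
    rw [max_lt_iff]
    constructor
    · refine lt_of_le_of_lt (degree_mul_le _ _) ?_
      refine lt_of_le_of_lt (add_le_add degree_C_le le_rfl) ?_
      rw [degree_X]
      norm_num
    · exact lt_of_le_of_lt degree_C_le (by norm_num)
  have hdeg2 : g.natDegree = 2 := by
    unfold g
    compute_degree!
  have hintx : IsIntegral ℚ x := Algebra.IsIntegral.isIntegral x
  have haev : aeval x g = 0 := by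
    unfold g
    simp only [map_add, map_mul, map_pow, aeval_X, aeval_C]
    rw [eq_ratCast (algebraMap ℚ K) a1, eq_ratCast (algebraMap ℚ K) a0]
    exact hev
  have hdvd : minpoly ℚ x ∣ g := minpoly.dvd ℚ x haev
  have hge : 2 ≤ (minpoly ℚ x).natDegree := by
    rw [minpoly.two_le_natDegree_iff hintx]
    exact hnrx
  have hle : (minpoly ℚ x).natDegree ≤ 2 := by
    rw [← hdeg2]
    exact Polynomial.natDegree_le_of_dvd hdvd hmon.ne_zero
  have hminx : minpoly ℚ x = g := eq_of_dvd_of_natDegree_le_of_leadingCoeff hdvd (by omega)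
    (by rw [(minpoly.monic hintx).leadingCoeff, hmon.leadingCoeff])
  have hmap : minpoly ℚ x = (minpoly ℤ x).map (algebraMap ℤ ℚ) :=
    minpoly.isIntegrallyClosed_eq_field_fractions' ℚ hx
  constructor
  · refine ⟨(minpoly ℤ x).coeff 1, ?_⟩
    have : g.coeff 1 = a1 := by
      unfold g
      simp [coeff_X_pow]
    rw [← this, ← hminx, hmap, coeff_map]
    simp
  · refine ⟨(minpoly ℤ x).coeff 0, ?_⟩
    have : g.coeff 0 = a0 := by
      unfold g
      simp [coeff_X_pow]
    rw [← this, ← hminx, hmap, coeff_map]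
    simp

set_option maxHeartbeats 2000000 in
/-- Let `D ≡ 5 (mod 12)` be squarefree with `D > 17` and `K = ℚ(√D)`. The
classical binary form `Q(x,y) = 3x² + 2(3+√D)xy + ((D+10)/3 + 2√D)y²` over
`𝓞 K` has determinant `3·c − b² = 1` and is additively indecomposable as a
classical form. -/
theorem stmt16 (D : ℤ) (hsf : Squarefree D) (h17 : 17 < D) (h12 : D % 12 = 5)
    (K : Type*) [Field K] [NumberField K] (r : K) (hr : r ^ 2 = D)
    (hdeg : Module.finrank ℚ K = 2)
    (b c : 𝓞 K) (hb : (b : K) = 3 + r)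
    (hc : (c : K) = ((D + 10) / 3 : ℤ) + 2 * r) :
    3 * (c : K) - (b : K) ^ 2 = 1 ∧
    ¬ ∃ a₁ b₁ c₁ a₂ b₂ c₂ : 𝓞 K,
      TPSDK K a₁ (2 * b₁) c₁ ∧ TPSDK K a₂ (2 * b₂) c₂ ∧
      ¬(a₁ = 0 ∧ b₁ = 0 ∧ c₁ = 0) ∧ ¬(a₂ = 0 ∧ b₂ = 0 ∧ c₂ = 0) ∧
      a₁ + a₂ = 3 ∧ b₁ + b₂ = b ∧ c₁ + c₂ = c := by
  have hDR : (0:ℝ) < (D:ℝ) := by exact_mod_cast (by omega : (0:ℤ) < D)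
  have hD17R : (17:ℝ) < (D:ℝ) := by exact_mod_cast h17
  have h3K : ((((D + 10) / 3 : ℤ)) : K) * 3 = (D : K) + 10 := by
    exact_mod_cast congrArg (fun n : ℤ => (n : K)) (by omega : ((D + 10) / 3) * 3 = D + 10)
  have part1 : 3 * (c : K) - (b : K) ^ 2 = 1 := by
    rw [hb, hc]
    linear_combination h3K - hr
  refine ⟨part1, ?_⟩
  rintro ⟨a₁, b₁, c₁, a₂, b₂, c₂, h1, h2, hn1, hn2, ha, hbb, hcc⟩
  -- r is irrational
  have hnr : r ∉ Set.range (algebraMap ℚ K) := by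
    rintro ⟨q, hq⟩
    have hq2 : q ^ 2 = (D:ℚ) := by
      have : ((q^2 : ℚ) : K) = (((D:ℚ)) : K) := by
        rw [← eq_ratCast (algebraMap ℚ K) (q^2), ← eq_ratCast (algebraMap ℚ K) (D:ℚ)]
        rw [map_pow, hq, hr]
        simp
      exact_mod_cast this
    obtain ⟨m, hm⟩ := ratden D hsf q (D^2) (by rw [hq2]; push_cast; ring)
    have hm2 : m ^ 2 = D := by
      have : (m:ℚ)^2 = (D:ℚ) := by rw [← hm, hq2]
      exact_mod_cast this
    have : IsUnit m := hsf m ⟨1, by rw [← hm2]; ring⟩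
    rcases Int.isUnit_iff.mp this with h' | h' <;> rw [h'] at hm2 <;> norm_num at hm2 <;> omega
  -- minimal polynomial of r
  have hintr : IsIntegral ℚ r := Algebra.IsIntegral.isIntegral r
  have hmp : minpoly ℚ r = X ^ 2 - C (D:ℚ) := by
    have hmon : (X ^ 2 - C (D:ℚ)).Monic := by
      apply Polynomial.monic_X_pow_sub_C <;> norm_num
    have haev : Polynomial.aeval r (X ^ 2 - C (D:ℚ)) = 0 := by
      simp only [map_sub, map_pow, aeval_X, aeval_C]
      rw [eq_ratCast (algebraMap ℚ K) (D:ℚ), hr]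
      push_cast
      ring
    have hdvd : minpoly ℚ r ∣ X ^ 2 - C (D:ℚ) := minpoly.dvd ℚ r haev
    have hdeg2 : (X ^ 2 - C (D:ℚ)).natDegree = 2 := by compute_degree!
    have hge : 2 ≤ (minpoly ℚ r).natDegree := by
      rw [minpoly.two_le_natDegree_iff hintr]
      exact hnr
    have hle : (minpoly ℚ r).natDegree ≤ 2 := by
      rw [← hdeg2]
      exact Polynomial.natDegree_le_of_dvd hdvd hmon.ne_zero
    exact eq_of_dvd_of_natDegree_le_of_leadingCoeff hdvd (by omega)
      (by rw [(minpoly.monic hintr).leadingCoeff, hmon.leadingCoeff])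
  -- the two real embeddings
  obtain ⟨σp, σm, hσp, hσm⟩ : ∃ σ τ : K →+* ℝ, σ r = Real.sqrt D ∧ τ r = -Real.sqrt D := by
    set pb := IntermediateField.adjoin.powerBasis hintr with hpb
    have hgen : minpoly ℚ pb.gen = minpoly ℚ r := minpoly_gen ℚ r
    have htop : ℚ⟮r⟯ = ⊤ := by
      have hfr : Module.finrank ℚ ℚ⟮r⟯ = 2 := by
        have := IntermediateField.adjoin.finrank hintr
        rw [hmp] at this
        simpa [this] using (by compute_degree! : ((X:ℚ[X]) ^ 2 - C (D:ℚ)).natDegree = 2)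
      have h1 : Subalgebra.toSubmodule (ℚ⟮r⟯.toSubalgebra) = ⊤ := by
        apply Submodule.eq_top_of_finrank_eq
        rw [hdeg]; exact hfr
      ext x
      rw [← IntermediateField.mem_toSubalgebra, ← Subalgebra.mem_toSubmodule, h1]
      simp
    let e : K ≃ₐ[ℚ] ℚ⟮r⟯ :=
      IntermediateField.topEquiv.symm.trans (IntermediateField.equivOfEq htop.symm)
    have her : e r = pb.gen := by
      apply Subtype.ext
      rfl
    have key : ∀ y : ℝ, y ^ 2 = D → ∃ σ : K →+* ℝ, σ r = y := by
      intro y hy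
      have haev : aeval y (minpoly ℚ pb.gen) = 0 := by
        rw [hgen, hmp]; simp [hy]
      refine ⟨((pb.lift y haev).comp e.toAlgHom).toRingHom, ?_⟩
      show (pb.lift y haev) (e r) = y
      rw [her]
      exact pb.lift_gen y haev
    obtain ⟨σ, hσ⟩ := key (Real.sqrt D) (Real.sq_sqrt hDR.le)
    obtain ⟨τ, hτ⟩ := key (-Real.sqrt D) (by rw [neg_pow]; simp [Real.sq_sqrt hDR.le])
    exact ⟨σ, τ, hσ, hτ⟩
  -- every element of K is p + q r with p q rational
  have hspan : ∀ x : K, ∃ p q : ℚ, x = (p : K) + (q : K) * r := by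
    have hli : LinearIndependent ℚ ![(1:K), r] := by
      rw [LinearIndependent.pair_iff]
      intro s t hst
      have hst' : (s:K) + (t:K) * r = 0 := by
        rw [Algebra.smul_def, Algebra.smul_def, mul_one] at hst
        rw [eq_ratCast (algebraMap ℚ K) s, eq_ratCast (algebraMap ℚ K) t] at hst
        exact hst
      by_contra hcon
      have ht : t ≠ 0 := by
        rintro rfl
        apply hcon
        refine ⟨?_, rfl⟩
        have : (s : K) = 0 := by simpa using hst'
        exact_mod_cast this
      apply hnr
      refine ⟨-s/t, ?_⟩
      rw [eq_ratCast (algebraMap ℚ K)]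
      have htK : (t:K) ≠ 0 := by exact_mod_cast ht
      push_cast
      field_simp
      linear_combination -hst'
    have hsp : Submodule.span ℚ (Set.range ![(1:K), r]) = ⊤ := by
      apply Submodule.eq_top_of_finrank_eq
      rw [finrank_span_eq_card hli, hdeg]
      simp
    intro x
    have hx : x ∈ Submodule.span ℚ ({(1:K), r} : Set K) := by
      have hrange : (Set.range ![(1:K), r]) = {(1:K), r} := by
        ext z
        simp [Fin.exists_fin_two]
        tauto
      rw [← hrange, hsp]
      trivial
    obtain ⟨p, q, hpq⟩ := Submodule.mem_span_pair.mp hx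
    refine ⟨p, q, ?_⟩
    rw [← hpq, Algebra.smul_def, Algebra.smul_def, mul_one,
      eq_ratCast (algebraMap ℚ K) p, eq_ratCast (algebraMap ℚ K) q]
  -- key decomposition with integrality information
  have hkey : ∀ x : K, IsIntegral ℤ x → ∃ p q : ℚ, x = (p : K) + (q : K) * r ∧
      σp x = p + q * Real.sqrt D ∧ σm x = p - q * Real.sqrt D ∧
      (∃ n : ℤ, (p ^ 2 - D * q ^ 2 : ℚ) = n) ∧ (∃ s : ℤ, (2 * p : ℚ) = s) ∧
      (q = 0 → ∃ m : ℤ, p = (m:ℚ)) := by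
    intro x hx
    obtain ⟨p, q, hpq⟩ := hspan x
    have hsp' : σp x = p + q * Real.sqrt D := by
      rw [hpq, map_add, map_mul, hσp, map_ratCast, map_ratCast]
    have hsm' : σm x = p - q * Real.sqrt D := by
      rw [hpq, map_add, map_mul, hσm, map_ratCast, map_ratCast]; ring
    rcases eq_or_ne q 0 with hq0 | hq0
    · subst hq0
      have hxp : x = algebraMap ℚ K p := by
        rw [hpq, eq_ratCast (algebraMap ℚ K)]; push_cast; ring
      rw [hxp] at hx
      have hp : IsIntegral ℤ p := (isIntegral_algebraMap_iff (algebraMap ℚ K).injective).mp hx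
      obtain ⟨m, hm⟩ := IsIntegrallyClosed.isIntegral_iff.mp hp
      have hm' : p = (m:ℚ) := by rw [← hm]; simp
      exact ⟨p, 0, hpq, hsp', hsm', ⟨m^2, by rw [hm']; push_cast; ring⟩,
        ⟨2*m, by rw [hm']; push_cast; ring⟩, fun _ => ⟨m, hm'⟩⟩
    · have hxnr : x ∉ Set.range (algebraMap ℚ K) := by
        rintro ⟨s, hs⟩
        apply hnr
        refine ⟨(s - p)/q, ?_⟩
        rw [eq_ratCast (algebraMap ℚ K)]
        rw [eq_ratCast (algebraMap ℚ K)] at hs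
        have hqK : (q:K) ≠ 0 := by exact_mod_cast hq0
        push_cast
        rw [div_eq_iff hqK, eq_comm]
        linear_combination - hs - hpq
      have hev : x ^ 2 + ((-(2*p) : ℚ) : K) * x + ((p^2 - D*q^2 : ℚ) : K) = 0 := by
        rw [hpq]; push_cast
        linear_combination (q:K)^2 * hr
      obtain ⟨⟨s, hs⟩, ⟨n, hn⟩⟩ := int_coeffs x (-(2*p)) (p^2 - D*q^2) hx hxnr hev
      exact ⟨p, q, hpq, hsp', hsm', ⟨n, hn⟩, ⟨-s, by push_cast; linarith [hs]⟩,
        fun h => absurd h hq0⟩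
  -- zero-or-one lemma
  have hZO : ∀ x : K, IsIntegral ℤ x → 0 ≤ σp x → 0 ≤ σm x → σp x ≤ 1 → σm x ≤ 1 →
      x = 0 ∨ x = 1 := by
    intro x hx h0p h0m h1p h1m
    obtain ⟨p, q, hpq, hsp', hsm', ⟨n, hn⟩, -, -⟩ := hkey x hx
    have hprod : σp x * σm x = (n:ℝ) := by
      rw [hsp', hsm']
      have : ((p:ℝ) + q * Real.sqrt D) * ((p:ℝ) - q * Real.sqrt D)
          = (p:ℝ)^2 - (D:ℝ) * (q:ℝ)^2 := by
        have hs : Real.sqrt D ^ 2 = (D:ℝ) := Real.sq_sqrt hDR.le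
        nlinarith [hs]
      rw [this]
      exact_mod_cast congrArg (fun z : ℚ => (z:ℝ)) hn
    have hn01 : n = 0 ∨ n = 1 := by
      have h0 : (0:ℝ) ≤ (n:ℝ) := hprod ▸ mul_nonneg h0p h0m
      have h1 : (n:ℝ) ≤ 1 := by
        rw [← hprod]
        nlinarith
      have h0' : (0:ℤ) ≤ n := by exact_mod_cast h0
      have h1' : n ≤ 1 := by exact_mod_cast h1
      omega
    rcases hn01 with hn0 | hn1
    · left
      rw [hn0] at hprod
      push_cast at hprod
      rcases mul_eq_zero.mp hprod with h' | h'
      · exact σp.injective (by rw [h', map_zero])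
      · exact σm.injective (by rw [h', map_zero])
    · right
      rw [hn1] at hprod
      push_cast at hprod
      have hx1 : σp x = 1 := by nlinarith
      exact σp.injective (by rw [hx1, map_one])
  -- rationality from small spread
  have hInt : ∀ x : K, IsIntegral ℤ x → (σp x - σm x) ^ 2 < (D:ℝ) →
      ∃ m : ℤ, x = (m:K) ∧ σp x = m ∧ σm x = m := by
    intro x hx hsmall
    obtain ⟨p, q, hpq, hsp', hsm', ⟨n, hn⟩, ⟨s, hs⟩, hq0int⟩ := hkey x hx
    have hdiff : (σp x - σm x) ^ 2 = 4 * (q:ℝ)^2 * (D:ℝ) := by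
      rw [hsp', hsm']
      have hsq : Real.sqrt D ^ 2 = (D:ℝ) := Real.sq_sqrt hDR.le
      nlinarith [hsq]
    have hyint : ((2*q : ℚ))^2 * (D:ℚ) = ((s^2 - 4*n : ℤ) : ℚ) := by
      push_cast
      linear_combination (-4:ℚ) * hn + ((s:ℚ) + 2*p) * hs
    obtain ⟨m, hm⟩ := ratden D hsf (2*q) (s^2 - 4*n) hyint
    have hq0 : q = 0 := by
      by_contra hq
      have hm0 : m ≠ 0 := by
        intro h0
        rw [h0] at hm
        norm_num at hm
        exact hq hm
      have h1m : (1:ℝ) ≤ (m:ℝ)^2 := by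
        have : (1:ℤ) ≤ m^2 := by rcases lt_or_gt_of_ne hm0 with h'|h' <;> nlinarith
        exact_mod_cast this
      have hq2 : (2*(q:ℝ))^2 = (m:ℝ)^2 := by
        have : 2*(q:ℝ) = ((m:ℤ):ℝ) := by exact_mod_cast congrArg (fun z : ℚ => (z:ℝ)) hm
        rw [this]
      rw [hdiff] at hsmall
      have h4 : (1:ℝ) ≤ 4*(q:ℝ)^2 := by nlinarith
      nlinarith [mul_le_mul_of_nonneg_right h4 hDR.le]
    obtain ⟨m, hm'⟩ := hq0int hq0
    refine ⟨m, ?_, ?_, ?_⟩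
    · rw [hpq, hq0, hm']; push_cast; ring
    · rw [hsp', hq0, hm']; push_cast; ring
    · rw [hsm', hq0, hm']; push_cast; ring
  -- no square root of 2, no third of 1
  have no_sqrt2 : ∀ t : K, IsIntegral ℤ t → t ^ 2 = 2 → False := by
    intro t ht ht2
    have hp2 : σp t ^ 2 = 2 := by
      rw [← map_pow, ht2, map_ofNat]
    have hm2 : σm t ^ 2 = 2 := by
      rw [← map_pow, ht2, map_ofNat]
    obtain ⟨m, hmt, hmp', -⟩ := hInt t ht (by nlinarith [sq_nonneg (σp t + σm t)])
    have : (m:ℝ)^2 = 2 := by rw [← hmp']; exact hp2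
    have hm2' : m^2 = 2 := by exact_mod_cast this
    have hb1 : m ≤ 1 := by nlinarith
    have hb2 : -1 ≤ m := by nlinarith
    interval_cases m <;> omega
  have no_third : ∀ t : K, IsIntegral ℤ t → 3 * t = 1 → False := by
    intro t ht ht3
    have htr : t = algebraMap ℚ K (1/3 : ℚ) := by
      rw [eq_ratCast (algebraMap ℚ K)]
      have h3 : (3:K) ≠ 0 := by norm_num
      field_simp
      linear_combination (1/3 : K) * ht3
    rw [htr] at ht
    have := (isIntegral_algebraMap_iff (algebraMap ℚ K).injective).mp ht
    obtain ⟨m, hm⟩ := IsIntegrallyClosed.isIntegral_iff.mp this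
    have : (m:ℚ) = 1/3 := by rwa [eq_intCast] at hm
    have : (m:ℚ) * 3 = 1 := by rw [this]; norm_num
    have : m * 3 = 1 := by exact_mod_cast this
    omega
  -- coefficients in K
  have haK : (a₁:K) + (a₂:K) = 3 := by
    have h := congrArg (algebraMap (𝓞 K) K) ha
    rw [map_add, map_ofNat] at h
    exact h
  have hbK : (b₁:K) + (b₂:K) = (b:K) := by
    have h := congrArg (algebraMap (𝓞 K) K) hbb
    rw [map_add] at h
    exact h
  have hcK : (c₁:K) + (c₂:K) = (c:K) := by
    have h := congrArg (algebraMap (𝓞 K) K) hcc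
    rw [map_add] at h
    exact h
  -- PSD data at each embedding
  have hpsd : ∀ (x y z : 𝓞 K), TPSDK K x (2*y) z → ∀ σ : K →+* ℝ,
      0 ≤ σ x ∧ 0 ≤ σ z ∧ (σ y) ^ 2 ≤ σ x * σ z := by
    intro x y z hT σ
    apply psd3
    intro u v
    have hTv := hT σ u v
    rw [map_mul, map_ofNat] at hTv
    exact hTv
  have hp1 := hpsd a₁ b₁ c₁ h1
  have hp2 := hpsd a₂ b₂ c₂ h2
  -- determinants and cross term
  set dA : K := (a₁:K) * (c₁:K) - (b₁:K)^2 with hdA_def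
  set dB : K := (a₂:K) * (c₂:K) - (b₂:K)^2 with hdB_def
  set cr : K := (a₁:K) * (c₂:K) + (a₂:K) * (c₁:K) - 2 * ((b₁:K) * (b₂:K)) with hcr_def
  have hdA_int : IsIntegral ℤ dA := by
    have : dA = ((a₁ * c₁ - b₁^2 : 𝓞 K) : K) := by push_cast; ring
    rw [this]
    exact RingOfIntegers.isIntegral_coe _
  have hdB_int : IsIntegral ℤ dB := by
    have : dB = ((a₂ * c₂ - b₂^2 : 𝓞 K) : K) := by push_cast; ring
    rw [this]
    exact RingOfIntegers.isIntegral_coe _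
  have hcr_int : IsIntegral ℤ cr := by
    have : cr = ((a₁ * c₂ + a₂ * c₁ - 2 * (b₁ * b₂) : 𝓞 K) : K) := by
      push_cast [map_ofNat]
      ring
    rw [this]
    exact RingOfIntegers.isIntegral_coe _
  have hsum : dA + dB + cr = 1 := by
    rw [hdA_def, hdB_def, hcr_def]
    linear_combination part1 + ((c₁:K) + (c₂:K)) * haK + 3 * hcK
      - ((b₁:K) + (b₂:K) + (b:K)) * hbK
  -- nonnegativity of the three pieces at each embedding
  have hσdA : ∀ σ : K →+* ℝ, σ dA = σ (a₁:K) * σ (c₁:K) - σ (b₁:K)^2 := by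
    intro σ
    rw [hdA_def, map_sub, map_mul, map_pow]
  have hσdB : ∀ σ : K →+* ℝ, σ dB = σ (a₂:K) * σ (c₂:K) - σ (b₂:K)^2 := by
    intro σ
    rw [hdB_def, map_sub, map_mul, map_pow]
  have hσcr : ∀ σ : K →+* ℝ, σ cr = σ (a₁:K) * σ (c₂:K) + σ (a₂:K) * σ (c₁:K)
      - 2 * (σ (b₁:K) * σ (b₂:K)) := by
    intro σ
    rw [hcr_def]
    push_cast
    rw [map_sub, map_add, map_mul, map_mul, map_mul, map_mul, map_ofNat]
  have hdA_nn : ∀ σ : K →+* ℝ, 0 ≤ σ dA := by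
    intro σ
    rw [hσdA σ]
    obtain ⟨h1', h2', h3'⟩ := hp1 σ
    linarith
  have hdB_nn : ∀ σ : K →+* ℝ, 0 ≤ σ dB := by
    intro σ
    rw [hσdB σ]
    obtain ⟨h1', h2', h3'⟩ := hp2 σ
    linarith
  have hcr_nn : ∀ σ : K →+* ℝ, 0 ≤ σ cr := by
    intro σ
    rw [hσcr σ]
    obtain ⟨hA1, hC1, hB1⟩ := hp1 σ
    obtain ⟨hA2, hC2, hB2⟩ := hp2 σ
    nlinarith [sq_nonneg (σ (a₁:K) * σ (c₂:K) - σ (a₂:K) * σ (c₁:K)),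
      mul_nonneg hA1 hC2, mul_nonneg hA2 hC1,
      mul_le_mul hB1 hB2 (sq_nonneg _) (mul_nonneg hA1 hC1),
      sq_nonneg (σ (b₁:K) * σ (b₂:K)),
      sq_nonneg (σ (a₁:K) * σ (c₂:K) + σ (a₂:K) * σ (c₁:K) - 2 * (σ (b₁:K) * σ (b₂:K)))]
  have hσsum : ∀ σ : K →+* ℝ, σ dA + σ dB + σ cr = 1 := by
    intro σ
    rw [← map_add, ← map_add, hsum, map_one]
  -- each of dA dB cr is 0 or 1
  have hdA01 : dA = 0 ∨ dA = 1 :=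
    hZO dA hdA_int (hdA_nn σp) (hdA_nn σm)
      (by have := hσsum σp; linarith [hdB_nn σp, hcr_nn σp])
      (by have := hσsum σm; linarith [hdB_nn σm, hcr_nn σm])
  have hdB01 : dB = 0 ∨ dB = 1 :=
    hZO dB hdB_int (hdB_nn σp) (hdB_nn σm)
      (by have := hσsum σp; linarith [hdA_nn σp, hcr_nn σp])
      (by have := hσsum σm; linarith [hdA_nn σm, hcr_nn σm])
  have hcr01 : cr = 0 ∨ cr = 1 :=
    hZO cr hcr_int (hcr_nn σp) (hcr_nn σm)
      (by have := hσsum σp; linarith [hdA_nn σp, hdB_nn σp])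
      (by have := hσsum σm; linarith [hdA_nn σm, hdB_nn σm])
  -- helper : rank-one summand forces vanishing (case A)
  have caseA : ∀ (x₁ y₁ z₁ x₂ y₂ z₂ : 𝓞 K),
      (∀ σ : K →+* ℝ, 0 ≤ σ (x₁:K) ∧ 0 ≤ σ (z₁:K) ∧ (σ (y₁:K))^2 ≤ σ (x₁:K) * σ (z₁:K)) →
      ((x₁:K) * (z₁:K) - (y₁:K)^2 = 1) →
      ((x₂:K) * (z₂:K) - (y₂:K)^2 = 0) →
      ((x₁:K) * (z₂:K) + (x₂:K) * (z₁:K) - 2 * ((y₁:K) * (y₂:K)) = 0) →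
      (∀ σ : K →+* ℝ, 0 ≤ σ (x₂:K) ∧ 0 ≤ σ (z₂:K) ∧ (σ (y₂:K))^2 ≤ σ (x₂:K) * σ (z₂:K)) →
      x₂ = 0 ∧ y₂ = 0 ∧ z₂ = 0 := by
    intro x₁ y₁ z₁ x₂ y₂ z₂ hP1 hd1 hd2 hcr0 hP2
    obtain ⟨hA1, hC1, -⟩ := hP1 σp
    obtain ⟨hA2, hC2, -⟩ := hP2 σp
    have hd1' : σp (x₁:K) * σp (z₁:K) - σp (y₁:K)^2 = 1 := by
      have := congrArg σp hd1
      rw [map_sub, map_mul, map_pow, map_one] at this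
      exact this
    have hd2' : σp (x₂:K) * σp (z₂:K) - σp (y₂:K)^2 = 0 := by
      have := congrArg σp hd2
      rw [map_sub, map_mul, map_pow, map_zero] at this
      exact this
    have hcr' : σp (x₁:K) * σp (z₂:K) + σp (x₂:K) * σp (z₁:K)
        - 2 * (σp (y₁:K) * σp (y₂:K)) = 0 := by
      have := congrArg σp hcr0
      rw [map_sub, map_add, map_mul, map_mul, map_mul, map_mul, map_ofNat, map_zero] at this
      exact this
    obtain ⟨hx2, hy2, hz2⟩ := caseA_real hA1 hC1 hA2 hC2 hd1' hd2' hcr'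
    refine ⟨?_, ?_, ?_⟩
    · have : (x₂:K) = 0 := σp.injective (by rw [hx2, map_zero])
      exact_mod_cast this
    · have : (y₂:K) = 0 := σp.injective (by rw [hy2, map_zero])
      exact_mod_cast this
    · have : (z₂:K) = 0 := σp.injective (by rw [hz2, map_zero])
      exact_mod_cast this
  -- main case analysis
  rcases hdA01 with hdA0 | hdA1
  · rcases hdB01 with hdB0 | hdB1
    · -- case B : both determinants vanish, cross = 1
      have hcr1 : cr = 1 := by
        rcases hcr01 with h' | h'
        · rw [hdA0, hdB0, h'] at hsum; norm_num at hsum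
        · exact h'
      -- a₁ is a rational integer in [0,3]
      have hap3 : σp (a₁:K) + σp (a₂:K) = 3 := by
        have := congrArg σp haK
        rw [map_add, map_ofNat] at this
        exact this
      have ham3 : σm (a₁:K) + σm (a₂:K) = 3 := by
        have := congrArg σm haK
        rw [map_add, map_ofNat] at this
        exact this
      obtain ⟨m, hma, hmap', hmam'⟩ := hInt (a₁:K) (RingOfIntegers.isIntegral_coe a₁) (by
        obtain ⟨hA1p, -, -⟩ := hp1 σp
        obtain ⟨hA1m, -, -⟩ := hp1 σm
        obtain ⟨hA2p, -, -⟩ := hp2 σp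
        obtain ⟨hA2m, -, -⟩ := hp2 σm
        nlinarith)
      obtain ⟨hm0b, hm3b⟩ : 0 ≤ m ∧ m ≤ 3 := by
        obtain ⟨hA1p, -, -⟩ := hp1 σp
        obtain ⟨hA2p, -, -⟩ := hp2 σp
        constructor
        · exact_mod_cast (hmap' ▸ hA1p)
        · have : (m:ℝ) ≤ 3 := by rw [← hmap']; linarith
          exact_mod_cast this
      have ha2K : (a₂:K) = 3 - (m:K) := by rw [← haK, hma]; ring
      have hdA0' : (a₁:K) * (c₁:K) - (b₁:K)^2 = 0 := hdA0
      have hdB0' : (a₂:K) * (c₂:K) - (b₂:K)^2 = 0 := hdB0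
      have hcr1' : (a₁:K) * (c₂:K) + (a₂:K) * (c₁:K) - 2 * ((b₁:K) * (b₂:K)) = 1 := hcr1
      interval_cases m
      · -- a₁ = 0
        have ha10 : (a₁:K) = 0 := by rw [hma]; norm_num
        have hb10 : (b₁:K) = 0 := by
          have : (b₁:K)^2 = 0 := by linear_combination (c₁:K) * ha10 - hdA0'
          exact pow_eq_zero_iff (n := 2) (by norm_num) |>.mp this
        have ha23 : (a₂:K) = 3 := by rw [ha2K]; norm_num
        have h3c1 : 3 * (c₁:K) = 1 := by
          linear_combination hcr1' - (c₂:K) * ha10 - (c₁:K) * ha23 + 2 * (b₂:K) * hb10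
        exact no_third (c₁:K) (RingOfIntegers.isIntegral_coe c₁) h3c1
      · -- a₁ = 1, a₂ = 2 : (b₂ - 2 b₁)² = 2
        have ha11 : (a₁:K) = 1 := by rw [hma]; norm_num
        have ha22 : (a₂:K) = 2 := by rw [ha2K]; norm_num
        apply no_sqrt2 ((b₂ - 2*b₁ : 𝓞 K) : K) (RingOfIntegers.isIntegral_coe _)
        have hcast : ((b₂ - 2*b₁ : 𝓞 K) : K) = (b₂:K) - 2*(b₁:K) := by push_cast [map_ofNat]; ring
        rw [hcast]
        linear_combination (-1) * hdB0' + 2 * hcr1' - 4 * hdA0'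
          + ((c₂:K) - 2*(c₁:K)) * ha22 + (4*(c₁:K) - 2*(c₂:K)) * ha11
      · -- a₁ = 2, a₂ = 1 : (b₁ - 2 b₂)² = 2
        have ha12 : (a₁:K) = 2 := by rw [hma]; norm_num
        have ha21 : (a₂:K) = 1 := by rw [ha2K]; norm_num
        apply no_sqrt2 ((b₁ - 2*b₂ : 𝓞 K) : K) (RingOfIntegers.isIntegral_coe _)
        have hcast : ((b₁ - 2*b₂ : 𝓞 K) : K) = (b₁:K) - 2*(b₂:K) := by push_cast [map_ofNat]; ring
        rw [hcast]
        linear_combination (-1) * hdA0' + 2 * hcr1' - 4 * hdB0'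
          + ((c₁:K) - 2*(c₂:K)) * ha12 + (4*(c₂:K) - 2*(c₁:K)) * ha21
      · -- a₁ = 3, a₂ = 0
        have ha20 : (a₂:K) = 0 := by rw [ha2K]; norm_num
        have hb20 : (b₂:K) = 0 := by
          have : (b₂:K)^2 = 0 := by linear_combination (c₂:K) * ha20 - hdB0'
          exact pow_eq_zero_iff (n := 2) (by norm_num) |>.mp this
        have ha13 : (a₁:K) = 3 := by rw [hma]; norm_num
        have h3c2 : 3 * (c₂:K) = 1 := by
          linear_combination hcr1' - (c₁:K) * ha20 - (c₂:K) * ha13 + 2 * (b₁:K) * hb20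
        exact no_third (c₂:K) (RingOfIntegers.isIntegral_coe c₂) h3c2
    · -- case A' : dB = 1, so dA = 0 and cr = 0, second form has det 1
      have hdA0 : dA = 0 := hdA0
      have hcr0 : cr = 0 := by
        rcases hcr01 with h' | h'
        · exact h'
        · rw [hdA0, hdB1, h'] at hsum; norm_num at hsum
      obtain ⟨hx, hy, hz⟩ := caseA a₂ b₂ c₂ a₁ b₁ c₁ hp2 hdB1 hdA0
        (by rw [hcr_def] at hcr0; linear_combination hcr0) hp1
      exact hn1 ⟨hx, hy, hz⟩
  · -- case A : dA = 1, so dB = 0 and cr = 0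
    have hdB0 : dB = 0 := by
      rcases hdB01 with h' | h'
      · exact h'
      · rcases hcr01 with h'' | h'' <;> rw [hdA1, h', h''] at hsum <;> norm_num at hsum
    have hcr0 : cr = 0 := by
      rcases hcr01 with h' | h'
      · exact h'
      · rw [hdA1, hdB0, h'] at hsum; norm_num at hsum
    obtain ⟨hx, hy, hz⟩ := caseA a₁ b₁ c₁ a₂ b₂ c₂ hp1 hdA1 hdB0 hcr0 hp2
    exact hn2 ⟨hx, hy, hz⟩
end
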